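/- Substitution holds for the usage type system: let Γ and Δ be contexts such that the pointwise parallel composition Γ | Δ is defined. Then (1) if φ; Φ; Γ, v : T ⊢ e' : T' and Δ ⊢ e : T, then φ; Φ; Γ | Δ ⊢ e'[e/v] : T'; and (2) if φ; Φ; Γ, v : T ⊢ P ◁ K and Δ ⊢ e : T, then φ; Φ; Γ | Δ ⊢ P[e/v] ◁ K. -/

import Mathlib

namespace PiSpan

/-! ### Indices: integer expressions over index variables, with `∞` -/

abbrev IVar := ℕ

/-- Indices, built from index variables, function symbols (constants, addition,
multiplication, truncated subtraction, max, min) and `∞`. -/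
inductive Idx : Type where
  | var : IVar → Idx
  | const : ℕ → Idx
  | add : Idx → Idx → Idx
  | mul : Idx → Idx → Idx
  | sub : Idx → Idx → Idx
  | imax : Idx → Idx → Idx
  | imin : Idx → Idx → Idx
  | inf : Idx
  deriving DecidableEq

/-- Valuations of index variables. -/
abbrev Val := IVar → ℕ

/-- Interpretation of an index in `ℕ∞` under a valuation. -/
noncomputable def Idx.eval (ρ : Val) : Idx → ℕ∞
  | .var i => (ρ i : ℕ∞)
  | .const n => (n : ℕ∞)
  | .add I J => I.eval ρ + J.eval ρ
  | .mul I J => I.eval ρ * J.eval ρ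
  | .sub I J => I.eval ρ - J.eval ρ
  | .imax I J => max (I.eval ρ) (J.eval ρ)
  | .imin I J => min (I.eval ρ) (J.eval ρ)
  | .inf => ⊤

/-- Free index variables of an index. -/
def Idx.fv : Idx → Finset IVar
  | .var i => {i}
  | .const _ => ∅
  | .add I J => I.fv ∪ J.fv
  | .mul I J => I.fv ∪ J.fv
  | .sub I J => I.fv ∪ J.fv
  | .imax I J => I.fv ∪ J.fv
  | .imin I J => I.fv ∪ J.fv
  | .inf => ∅

/-- Substitution of the index `J` for the index variable `i`. -/
def Idx.subst : Idx → IVar → Idx → Idx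
  | .var x, i, J => if x = i then J else .var x
  | .const n, _, _ => .const n
  | .add a b, i, J => .add (a.subst i J) (b.subst i J)
  | .mul a b, i, J => .mul (a.subst i J) (b.subst i J)
  | .sub a b, i, J => .sub (a.subst i J) (b.subst i J)
  | .imax a b, i, J => .imax (a.subst i J) (b.subst i J)
  | .imin a b, i, J => .imin (a.subst i J) (b.subst i J)
  | .inf, _, _ => .inf

/-- A constraint `I ⋈ J` between two indices, for a binary relation `⋈` on `ℕ∞`. -/
structure Constraint where
  lhs : Idx
  rel : ℕ∞ → ℕ∞ → Prop
  rhs : Idx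

/-- Satisfaction of a constraint by a valuation. -/
def Constraint.sat (ρ : Val) (C : Constraint) : Prop :=
  C.rel (C.lhs.eval ρ) (C.rhs.eval ρ)

def Constraint.fv (C : Constraint) : Finset IVar := C.lhs.fv ∪ C.rhs.fv

def Constraint.subst (C : Constraint) (i : IVar) (J : Idx) : Constraint :=
  ⟨C.lhs.subst i J, C.rel, C.rhs.subst i J⟩

/-- A (finite) set of constraints. -/
abbrev CSet := List Constraint

def satAll (ρ : Val) (Φ : CSet) : Prop := ∀ C ∈ Φ, C.sat ρ

/-- `entails φ Φ C` : every valuation satisfying `Φ` satisfies `C`. -/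
def entails (_φ : Finset IVar) (Φ : CSet) (C : Constraint) : Prop :=
  ∀ ρ : Val, satAll ρ Φ → C.sat ρ

/-- Semantic comparison of indices under the constraints `Φ`. -/
def semLe (_φ : Finset IVar) (Φ : CSet) (I J : Idx) : Prop :=
  ∀ ρ : Val, satAll ρ Φ → I.eval ρ ≤ J.eval ρ

/-- Intervals `[I, J]` of indices. -/
structure Interval where
  lo : Idx
  hi : Idx
  deriving DecidableEq

def Interval.subst (A : Interval) (i : IVar) (J : Idx) : Interval :=
  ⟨A.lo.subst i J, A.hi.subst i J⟩

/-- `semIncl φ Φ A B` : the interval `A` is included in `B`, under every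
valuation satisfying `Φ`. -/
def semIncl (_φ : Finset IVar) (Φ : CSet) (A B : Interval) : Prop :=
  ∀ ρ : Val, satAll ρ Φ → B.lo.eval ρ ≤ A.lo.eval ρ ∧ A.hi.eval ρ ≤ B.hi.eval ρ

/-- Semantic equality of intervals under the constraints `Φ`. -/
def semEqI (_φ : Finset IVar) (Φ : CSet) (A B : Interval) : Prop :=
  ∀ ρ : Val, satAll ρ Φ → A.lo.eval ρ = B.lo.eval ρ ∧ A.hi.eval ρ = B.hi.eval ρ

/-- Capacities: either a single index `J` (to be understood as `[-∞, J]`)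
or an interval `[I, J]`. -/
inductive Cap where
  | single : Idx → Cap
  | intv : Idx → Idx → Cap
  deriving DecidableEq

def Cap.subst : Cap → IVar → Idx → Cap
  | .single a, i, J => .single (a.subst i J)
  | .intv a b, i, J => .intv (a.subst i J) (b.subst i J)

/-- `capLe φ Φ c d` : inclusion of capacities, a single index `J` being
understood as the interval `[-∞, J]`. -/
def capLe (φ : Finset IVar) (Φ : CSet) : Cap → Cap → Prop
  | .single I, .single J => semLe φ Φ I J
  | .single _, .intv _ _ => False
  | .intv _ J, .single J' => semLe φ Φ J J'
  | .intv I J, .intv I' J' => semLe φ Φ I' I ∧ semLe φ Φ J J'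

/-- Componentwise sum of intervals: `[I,J] + [I',J'] = [I+I', J+J']`. -/
def Interval.add (A B : Interval) : Interval := ⟨A.lo.add B.lo, A.hi.add B.hi⟩

/-- Sum of an interval and a capacity: `[I,J] + J' = [I, J+J']` (single index)
and componentwise sum for an interval capacity. -/
def Interval.addCap (A : Interval) : Cap → Interval
  | .single J => ⟨A.lo, A.hi.add J⟩
  | .intv I J => ⟨A.lo.add I, A.hi.add J⟩

/-- The operation `⊞`: `A ⊞ J = [0, lo(A)+J]` and `A ⊞ [I,J] = [hi(A)+I, lo(A)+J]`. -/
def Interval.boxPlus (A : Interval) : Cap → Interval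
  | .single J => ⟨.const 0, A.lo.add J⟩
  | .intv I J => ⟨A.hi.add I, A.lo.add J⟩

/-- The join `[I,J] ⊔ [I',J'] = [max(I,I'), max(J,J')]`. -/
def Interval.join (A B : Interval) : Interval := ⟨A.lo.imax B.lo, A.hi.imax B.hi⟩

def zeroI : Interval := ⟨.const 0, .const 0⟩
def oneI : Interval := ⟨.const 1, .const 1⟩
def constI (n : ℕ) : Interval := ⟨.const n, .const n⟩

/-! ### Usages -/

/-- Usages: CCS-like processes on a single channel, where each action carries
an obligation interval and a capacity. -/
inductive Usage where
  | nil : Usage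
  | par : Usage → Usage → Usage
  | inp : Interval → Cap → Usage → Usage
  | out : Interval → Cap → Usage → Usage
  | bang : Usage → Usage
  | choice : Usage → Usage → Usage
  deriving DecidableEq

/-- Delaying `↑^{A}U` : adds `A` to the obligation of every top-level action. -/
def Usage.delay (A : Interval) : Usage → Usage
  | .nil => .nil
  | .par U V => .par (U.delay A) (V.delay A)
  | .inp B c U => .inp (A.add B) c U
  | .out B c U => .out (A.add B) c U
  | .bang U => .bang (U.delay A)
  | .choice U V => .choice (U.delay A) (V.delay A)

/-- Delaying by a capacity `↑^{J_c}U`. -/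
def Usage.delayCap (c : Cap) : Usage → Usage
  | .nil => .nil
  | .par U V => .par (U.delayCap c) (V.delayCap c)
  | .inp B d U => .inp (B.addCap c) d U
  | .out B d U => .out (B.addCap c) d U
  | .bang U => .bang (U.delayCap c)
  | .choice U V => .choice (U.delayCap c) (V.delayCap c)

def Usage.subst : Usage → IVar → Idx → Usage
  | .nil, _, _ => .nil
  | .par U V, i, J => .par (U.subst i J) (V.subst i J)
  | .inp B c U, i, J => .inp (B.subst i J) (c.subst i J) (U.subst i J)
  | .out B c U, i, J => .out (B.subst i J) (c.subst i J) (U.subst i J)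
  | .bang U, i, J => .bang (U.subst i J)
  | .choice U V, i, J => .choice (U.subst i J) (V.subst i J)

/-- Congruence on usages. -/
inductive UCongr : Usage → Usage → Prop
  | refl : UCongr U U
  | symm : UCongr U V → UCongr V U
  | trans : UCongr U V → UCongr V W → UCongr U W
  | parNil : UCongr (.par U .nil) U
  | parComm : UCongr (.par U V) (.par V U)
  | parAssoc : UCongr (.par U (.par V W)) (.par (.par U V) W)
  | bangNil : UCongr (.bang .nil) .nil
  | bangUnfold : UCongr (.bang U) (.par (.bang U) U)
  | bangPar : UCongr (.bang (.par U V)) (.par (.bang U) (.bang V))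
  | bangBang : UCongr (.bang (.bang U)) (.bang U)
  | parCtx : UCongr U U' → UCongr V V' → UCongr (.par U V) (.par U' V')
  | inpCtx : UCongr U U' → UCongr (.inp A c U) (.inp A c U')
  | outCtx : UCongr U U' → UCongr (.out A c U) (.out A c U')
  | bangCtx : UCongr U U' → UCongr (.bang U) (.bang U')
  | choiceCtx : UCongr U U' → UCongr V V' → UCongr (.choice U V) (.choice U' V')

/-- Result of a usage reduction step: a usage, or the error `Error`. -/
inductive URes where
  | ok : Usage → URes
  | err : URes

/-- Congruence extended to reduction results. -/
inductive RCongr : URes → URes → Prop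
  | ok : UCongr U V → RCongr (.ok U) (.ok V)
  | err : RCongr .err .err

/-- Side condition for a successful synchronization:
`Φ ⊨ B ⊆ A ⊞ I_c` and `Φ ⊨ A ⊆ B ⊞ J_c`. -/
def goodSync (φ : Finset IVar) (Φ : CSet) (A : Interval) (ic : Cap)
    (B : Interval) (jc : Cap) : Prop :=
  semIncl φ Φ B (A.boxPlus ic) ∧ semIncl φ Φ A (B.boxPlus jc)

/-- Reduction of usages (possibly to `Error`). -/
inductive URed (φ : Finset IVar) (Φ : CSet) : Usage → URes → Prop
  | comm : goodSync φ Φ A ic B jc →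
      URed φ Φ (.par (.inp A ic U) (.out B jc V)) (.ok ((U.par V).delay (A.join B)))
  | commErr : ¬ goodSync φ Φ A ic B jc →
      URed φ Φ (.par (.inp A ic U) (.out B jc V)) .err
  | choiceL : URed φ Φ (.choice U V) (.ok U)
  | choiceR : URed φ Φ (.choice U V) (.ok V)
  | parCtx : URed φ Φ U (.ok U') → URed φ Φ (.par U V) (.ok (.par U' V))
  | parErr : URed φ Φ U .err → URed φ Φ (.par U V) .err
  | congr : UCongr U U' → URed φ Φ U' R' → RCongr R' R → URed φ Φ U R

/-- Multi-step reduction of usages (never going through an error). -/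
def URedStar (φ : Finset IVar) (Φ : CSet) : Usage → Usage → Prop :=
  Relation.ReflTransGen (fun U V => URed φ Φ U (.ok V))

/-- Multi-step reduction towards a result, possibly ending with an error step. -/
def URedStarRes (φ : Finset IVar) (Φ : CSet) (U : Usage) : URes → Prop
  | .ok V => URedStar φ Φ U V
  | .err => ∃ W, URedStar φ Φ U W ∧ URed φ Φ W .err

/-- A usage is reliable when no reduction sequence from it leads to an error. -/
def Reliable (φ : Finset IVar) (Φ : CSet) (U : Usage) : Prop :=
  ∀ V, URedStar φ Φ U V → ¬ URed φ Φ V .err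

/-- The subusage relation. -/
inductive SubU (φ : Finset IVar) (Φ : CSet) : Usage → Usage → Prop
  | toNil : SubU φ Φ U .nil
  | choiceElimL : SubU φ Φ (.choice U V) U
  | choiceElimR : SubU φ Φ (.choice U V) V
  | choiceCtxL : SubU φ Φ U U' → SubU φ Φ (.choice U V) (.choice U' V)
  | choiceCtxR : SubU φ Φ V V' → SubU φ Φ (.choice U V) (.choice U V')
  | parCtx : SubU φ Φ U U' → SubU φ Φ (.par U V) (.par U' V)
  | bangCtx : SubU φ Φ U U' → SubU φ Φ (.bang U) (.bang U')
  | congr : UCongr U U' → SubU φ Φ U' V' → UCongr V' V → SubU φ Φ U V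
  | trans : SubU φ Φ U U' → SubU φ Φ U' U'' → SubU φ Φ U U''
  | inpCtx : SubU φ Φ U U' → SubU φ Φ (.inp A c U) (.inp A c U')
  | outCtx : SubU φ Φ U U' → SubU φ Φ (.out A c U) (.out A c U')
  | inpWeak : semIncl φ Φ B A → capLe φ Φ ic jc → SubU φ Φ (.inp A ic U) (.inp B jc U)
  | outWeak : semIncl φ Φ B A → capLe φ Φ ic jc → SubU φ Φ (.out A ic U) (.out B jc U)
  | inpScope : SubU φ Φ (.par (.inp A jc U) (V.delay (A.addCap jc))) (.inp A jc (.par U V))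
  | outScope : SubU φ Φ (.par (.out A jc U) (V.delay (A.addCap jc))) (.out A jc (.par U V))

/-- Subusage extended to reduction results, with the convention that
`Error ⊑ W` for every usage `W` and the only result below `Error` is `Error`. -/
def SubR (φ : Finset IVar) (Φ : CSet) : URes → URes → Prop
  | .err, _ => True
  | .ok _, .err => False
  | .ok U, .ok V => SubU φ Φ U V

/-! ### The π-calculus with tick -/

/-- Variables / channel names. -/
abbrev Name := ℕ

/-- Expressions: variables, zero, successor. -/
inductive Expr where
  | var : Name → Expr
  | zero : Expr
  | succ : Expr → Expr
  deriving DecidableEq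

/-- Free variables of an expression. -/
def Expr.fv : Expr → Finset Name
  | .var x => {x}
  | .zero => ∅
  | .succ e => e.fv

/-- Substitution of the expression `e` for the variable `v` in an expression. -/
def Expr.subst : Expr → Name → Expr → Expr
  | .var x, v, e => if x = v then e else .var x
  | .zero, _, _ => .zero
  | .succ e', v, e => .succ (e'.subst v e)

/-- Processes of the π-calculus with tick. -/
inductive Proc where
  | nil : Proc
  | par : Proc → Proc → Proc
  | repIn : Name → List Name → Proc → Proc
  | inp : Name → List Name → Proc → Proc
  | out : Name → List Expr → Proc → Proc
  | nu : Name → Proc → Proc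
  | tick : Proc → Proc
  | case : Expr → Proc → Name → Proc → Proc
  deriving DecidableEq

/-- Free names/variables of a process. -/
def Proc.fn : Proc → Finset Name
  | .nil => ∅
  | .par P Q => P.fn ∪ Q.fn
  | .repIn a xs P => insert a (P.fn \ xs.toFinset)
  | .inp a xs P => insert a (P.fn \ xs.toFinset)
  | .out a es P => insert a ((es.foldr (fun e s => e.fv ∪ s) ∅) ∪ P.fn)
  | .nu a P => P.fn \ {a}
  | .tick P => P.fn
  | .case e P x Q => e.fv ∪ P.fn ∪ (Q.fn \ {x})

/-- Substitution in channel-name position: a name is replaced only by a name. -/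
def substName (a : Name) (v : Name) (e : Expr) : Name :=
  if a = v then (match e with | .var b => b | _ => a) else a

/-- Substitution of the expression `e` for the variable `v` in a process. -/
def Proc.subst : Proc → Name → Expr → Proc
  | .nil, _, _ => .nil
  | .par P Q, v, e => .par (P.subst v e) (Q.subst v e)
  | .repIn a xs P, v, e =>
      .repIn (substName a v e) xs (if v ∈ xs then P else P.subst v e)
  | .inp a xs P, v, e =>
      .inp (substName a v e) xs (if v ∈ xs then P else P.subst v e)
  | .out a es P, v, e =>
      .out (substName a v e) (es.map (fun e' => e'.subst v e)) (P.subst v e)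
  | .nu a P, v, e => .nu a (if v = a then P else P.subst v e)
  | .tick P, v, e => .tick (P.subst v e)
  | .case e' P x Q, v, e =>
      .case (e'.subst v e) (P.subst v e) x (if v = x then Q else Q.subst v e)

/-! ### Types with usages and the type system -/

/-- Types: sized integers `Nat[I,J]`, simple channels `Ch(T̄)/U`, and servers
`∀ī.Serv^K(T̄)/U`. -/
inductive Ty where
  | nat : Idx → Idx → Ty
  | ch : List Ty → Usage → Ty
  | serv : List IVar → Interval → List Ty → Usage → Ty

mutual
/-- Index substitution in a type (the bound index variables of a server are
not substituted). -/
def Ty.isubst : Ty → IVar → Idx → Ty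
  | .nat a b, i, J => .nat (a.subst i J) (b.subst i J)
  | .ch Ts U, i, J => .ch (Ty.isubstList Ts i J) (U.subst i J)
  | .serv bs K Ts U, i, J =>
      if i ∈ bs then .serv bs K Ts U
      else .serv bs (K.subst i J) (Ty.isubstList Ts i J) (U.subst i J)

def Ty.isubstList : List Ty → IVar → Idx → List Ty
  | [], _, _ => []
  | T :: Ts, i, J => Ty.isubst T i J :: Ty.isubstList Ts i J
end

/-- Simultaneous index substitution `T[Ī/ī]`, as an iterated substitution. -/
def Ty.misubst (T : Ty) (ps : List (IVar × Idx)) : Ty :=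
  ps.foldl (fun T p => T.isubst p.1 p.2) T

/-- Simultaneous index substitution in an interval. -/
def Interval.misubst (K : Interval) (ps : List (IVar × Idx)) : Interval :=
  ps.foldl (fun K p => K.subst p.1 p.2) K

/-- Delaying a type by an interval (acts on the usage of a channel or server). -/
def Ty.delayI (A : Interval) : Ty → Ty
  | .nat I J => .nat I J
  | .ch Ts U => .ch Ts (U.delay A)
  | .serv bs K Ts U => .serv bs K Ts (U.delay A)

/-- Delaying a type by a capacity. -/
def Ty.delayC (c : Cap) : Ty → Ty
  | .nat I J => .nat I J
  | .ch Ts U => .ch Ts (U.delayCap c)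
  | .serv bs K Ts U => .serv bs K Ts (U.delayCap c)

/-- Replication of a type `!T`. -/
def Ty.bangT : Ty → Ty
  | .nat I J => .nat I J
  | .ch Ts U => .ch Ts (.bang U)
  | .serv bs K Ts U => .serv bs K Ts (.bang U)

/-- A type is reliable when it is an integer type, or a channel or server type
with a reliable usage. -/
def ReliableTy (φ : Finset IVar) (Φ : CSet) : Ty → Prop
  | .nat _ _ => True
  | .ch _ U => Reliable φ Φ U
  | .serv _ _ _ U => Reliable φ Φ U

/-- Parallel composition of types (a partial operation, given as a relation). -/
inductive TyPar : Ty → Ty → Ty → Prop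
  | nat : TyPar (.nat I J) (.nat I J) (.nat I J)
  | ch : TyPar (.ch Ts U) (.ch Ts V) (.ch Ts (U.par V))
  | serv : TyPar (.serv bs K Ts U) (.serv bs K Ts V) (.serv bs K Ts (U.par V))

/-- Typing contexts. -/
abbrev Ctx := Name → Option Ty

def Ctx.update (Γ : Ctx) (a : Name) (T : Ty) : Ctx :=
  fun x => if x = a then some T else Γ x

def Ctx.extend (Γ : Ctx) (xs : List Name) (Ts : List Ty) : Ctx :=
  (xs.zip Ts).foldl (fun Δ p => Δ.update p.1 p.2) Γ

def Ctx.tmap (f : Ty → Ty) (Γ : Ctx) : Ctx := fun x => (Γ x).map f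

/-- Pointwise parallel composition of optional types. -/
inductive OptPar : Option Ty → Option Ty → Option Ty → Prop
  | none : OptPar none none none
  | some : TyPar T S R → OptPar (some T) (some S) (some R)

/-- Parallel composition of contexts `Θ = Γ | Δ` (a partial operation,
given as a relation). -/
def CtxPar (Γ Δ Θ : Ctx) : Prop := ∀ x, OptPar (Γ x) (Δ x) (Θ x)

/-- Subtyping. -/
inductive Sub : Finset IVar → CSet → Ty → Ty → Prop
  | nat : semLe φ Φ I' I → semLe φ Φ J J' →
      Sub φ Φ (.nat I J) (.nat I' J')
  | ch : Ts.length = Ts'.length →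
      (∀ p ∈ Ts.zip Ts', Sub φ Φ p.1 p.2) →
      (∀ p ∈ Ts'.zip Ts, Sub φ Φ p.1 p.2) →
      SubU φ Φ U V →
      Sub φ Φ (.ch Ts U) (.ch Ts' V)
  | serv : Ts.length = Ts'.length →
      (∀ p ∈ Ts.zip Ts', Sub (φ ∪ bs.toFinset) Φ p.1 p.2) →
      (∀ p ∈ Ts'.zip Ts, Sub (φ ∪ bs.toFinset) Φ p.1 p.2) →
      semEqI (φ ∪ bs.toFinset) Φ K K' →
      SubU φ Φ U V →
      Sub φ Φ (.serv bs K Ts U) (.serv bs K' Ts' V)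

/-- Pointwise subtyping of optional types. -/
inductive OptSub (φ : Finset IVar) (Φ : CSet) : Option Ty → Option Ty → Prop
  | none : OptSub φ Φ none none
  | some : Sub φ Φ T S → OptSub φ Φ (some T) (some S)

/-- Subtyping of contexts, pointwise. -/
def CtxSub (φ : Finset IVar) (Φ : CSet) (Γ Δ : Ctx) : Prop :=
  ∀ x, OptSub φ Φ (Γ x) (Δ x)

/-- The composition `J_c; K` of a capacity and a complexity interval. -/
def seqComp : Cap → Interval → Interval
  | .single J, K => ⟨.const 0, J.add K.hi⟩
  | .intv .inf _, _ => ⟨.const 0, .const 0⟩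
  | .intv _ J, K => ⟨.const 0, J.add K.hi⟩

/-- Typing judgment for expressions `φ; Φ; Γ ⊢ e : T`. -/
inductive ETy : Finset IVar → CSet → Ctx → Expr → Ty → Prop
  | var : Γ x = some T → ETy φ Φ Γ (.var x) T
  | zero : ETy φ Φ Γ .zero (.nat (.const 0) (.const 0))
  | succ : ETy φ Φ Γ e (.nat I J) →
      ETy φ Φ Γ (.succ e) (.nat (I.add (.const 1)) (J.add (.const 1)))
  | sub : ETy φ Φ Δ e T' → CtxSub φ Φ Γ Δ → Sub φ Φ T' T → ETy φ Φ Γ e T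

/-- Typing judgment for processes `φ; Φ; Γ ⊢ P ◁ K`, where the interval `K`
bounds the parallel complexity of `P`. -/
inductive PTy : Finset IVar → CSet → Ctx → Proc → Interval → Prop
  | zero {φ : Finset IVar} {Φ : CSet} {Γ : Ctx} :
      PTy φ Φ Γ .nil zeroI
  | par {φ : Finset IVar} {Φ : CSet} {Γ Δ Θ : Ctx} {P Q : Proc} {K₁ K₂ : Interval} :
      PTy φ Φ Γ P K₁ → PTy φ Φ Δ Q K₂ → CtxPar Γ Δ Θ →
      PTy φ Φ Θ (.par P Q) (K₁.join K₂)
  | tick {φ : Finset IVar} {Φ : CSet} {Γ : Ctx} {P : Proc} {K : Interval} :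
      PTy φ Φ Γ P K →
      PTy φ Φ (Γ.tmap (Ty.delayI oneI)) (.tick P) (K.add oneI)
  | ich {φ : Finset IVar} {Φ : CSet} {Γ : Ctx} {a : Name} {xs : List Name}
      {Ts : List Ty} {U : Usage} {jc : Cap} {P : Proc} {K : Interval} :
      Γ a = none → (∀ x ∈ xs, Γ x = none) → a ∉ xs → xs.Nodup →
      xs.length = Ts.length →
      PTy φ Φ ((Γ.update a (.ch Ts U)).extend xs Ts) P K →
      PTy φ Φ ((Γ.tmap (Ty.delayC jc)).update a (.ch Ts (.inp zeroI jc U)))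
        (.inp a xs P) (seqComp jc K)
  | iserv {φ : Finset IVar} {Φ : CSet} {Γ : Ctx} {a : Name} {xs : List Name}
      {bs : List IVar} {Ts : List Ty} {U : Usage} {jc : Cap} {P : Proc}
      {K : Interval} :
      Γ a = none → (∀ x ∈ xs, Γ x = none) → a ∉ xs → xs.Nodup →
      xs.length = Ts.length →
      PTy (φ ∪ bs.toFinset) Φ ((Γ.update a (.serv bs K Ts U)).extend xs Ts) P K →
      PTy φ Φ (((Γ.tmap Ty.bangT).tmap (Ty.delayC jc)).update a
          (.serv bs K Ts (.bang (.inp zeroI jc U))))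
        (.repIn a xs P) zeroI
  | och {φ : Finset IVar} {Φ : CSet} {Γ Γ' Θ : Ctx} {a : Name} {es : List Expr}
      {Ts : List Ty} {U V : Usage} {jc : Cap} {P : Proc} {K : Interval} :
      Γ a = none → Γ' a = none →
      es.length = Ts.length →
      (∀ p ∈ es.zip Ts, ETy φ Φ (Γ'.update a (.ch Ts V)) p.1 p.2) →
      PTy φ Φ (Γ.update a (.ch Ts U)) P K →
      CtxPar Γ Γ' Θ →
      PTy φ Φ ((Θ.tmap (Ty.delayC jc)).update a (.ch Ts (.out zeroI jc (V.par U))))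
        (.out a es P) (seqComp jc K)
  | oserv {φ : Finset IVar} {Φ : CSet} {Γ Γ' Θ : Ctx} {a : Name} {es : List Expr}
      {bs : List IVar} {Is : List Idx} {Ts : List Ty} {U V : Usage} {jc : Cap}
      {P : Proc} {K K' : Interval} :
      Γ a = none → Γ' a = none →
      es.length = Ts.length → bs.length = Is.length →
      (∀ p ∈ es.zip (Ts.map (fun T => T.misubst (bs.zip Is))),
          ETy φ Φ (Γ'.update a (.serv bs K Ts V)) p.1 p.2) →
      PTy φ Φ (Γ.update a (.serv bs K Ts U)) P K' →
      CtxPar Γ Γ' Θ →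
      PTy φ Φ ((Θ.tmap (Ty.delayC jc)).update a
          (.serv bs K Ts (.out zeroI jc (V.par U))))
        (.out a es P) (seqComp jc (K'.join (K.misubst (bs.zip Is))))
  | case {φ : Finset IVar} {Φ : CSet} {Γ : Ctx} {e : Expr} {I J : Idx}
      {P Q : Proc} {x : Name} {K : Interval} :
      ETy φ Φ Γ e (.nat I J) →
      PTy φ (⟨I, (· ≤ ·), .const 0⟩ :: Φ) Γ P K →
      Γ x = none →
      PTy φ (⟨.const 1, (· ≤ ·), J⟩ :: Φ)
        (Γ.update x (.nat (I.sub (.const 1)) (J.sub (.const 1)))) Q K →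
      PTy φ Φ Γ (.case e P x Q) K
  | nu {φ : Finset IVar} {Φ : CSet} {Γ : Ctx} {a : Name} {T : Ty} {P : Proc}
      {K : Interval} :
      Γ a = none → ReliableTy φ Φ T →
      PTy φ Φ (Γ.update a T) P K → PTy φ Φ Γ (.nu a P) K
  | sub {φ : Finset IVar} {Φ : CSet} {Γ Δ : Ctx} {P : Proc} {K K' : Interval} :
      PTy φ Φ Δ P K → CtxSub φ Φ Γ Δ → semIncl φ Φ K K' → PTy φ Φ Γ P K'


/-!
The proof is by induction on the typing derivation of `P`. As `Γ | Δ` is defined, `Δ` has the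
domain of `Γ`, and only the free variable of `e` matters (there is at most one).

If `e` is closed, its type is an integer type, which is not linear: `P[e/v]` is typed in `Γ`
itself, and `Γ | Δ` is pointwise a subtype of `Γ`.

Otherwise `e` is `y` or an integer expression in `y`, and `v` is merged into `y`. The invariant
`MergeTy` records which type `y` may then receive; for a channel or a server it carries the
parallel composition of the usages of `y` and of `v`. It survives subtyping and the splitting of
usages in the parallel and output rules. In a prefix rule whose subject is `v` or `y`, the delayed
usage of the other variable has to move under the prefix: this is the scope law
`inpScope`/`outScope` of subusage, together with `U.delayCap c ⊑ U.delay (0 + c)`.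
-/

def ConstraintsImply (Φ' Φ : CSet) : Prop := ∀ ρ : Val, satAll ρ Φ' → satAll ρ Φ

theorem ConstraintsImply.refl (Φ : CSet) : ConstraintsImply Φ Φ := fun _ h => h

theorem ConstraintsImply.cons (C : Constraint) (Φ : CSet) : ConstraintsImply (C :: Φ) Φ :=
  fun _ h D hD => h D (List.mem_cons_of_mem _ hD)

section Semantic

variable {φ φ' : Finset IVar} {Φ Φ' : CSet}

theorem semLe.refl (I : Idx) : semLe φ Φ I I := fun _ _ => le_rfl

theorem semLe.trans {I J K : Idx} (h₁ : semLe φ Φ I J) (h₂ : semLe φ Φ J K) :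
    semLe φ Φ I K := fun ρ hρ => (h₁ ρ hρ).trans (h₂ ρ hρ)

theorem semLe.mono (hΦ : ConstraintsImply Φ' Φ) {I J : Idx} (h : semLe φ Φ I J) :
    semLe φ' Φ' I J := fun ρ hρ => h ρ (hΦ ρ hρ)

theorem semIncl.refl (A : Interval) : semIncl φ Φ A A := fun _ _ => ⟨le_rfl, le_rfl⟩

theorem semIncl.mono (hΦ : ConstraintsImply Φ' Φ) {A B : Interval} (h : semIncl φ Φ A B) :
    semIncl φ' Φ' A B := fun ρ hρ => h ρ (hΦ ρ hρ)

theorem semEqI.refl (A : Interval) : semEqI φ Φ A A := fun _ _ => ⟨rfl, rfl⟩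

theorem semEqI.symm {A B : Interval} (h : semEqI φ Φ A B) : semEqI φ Φ B A :=
  fun ρ hρ => ⟨(h ρ hρ).1.symm, (h ρ hρ).2.symm⟩

theorem semEqI.trans {A B C : Interval} (h₁ : semEqI φ Φ A B) (h₂ : semEqI φ Φ B C) :
    semEqI φ Φ A C :=
  fun ρ hρ => ⟨(h₁ ρ hρ).1.trans (h₂ ρ hρ).1, (h₁ ρ hρ).2.trans (h₂ ρ hρ).2⟩

theorem semEqI.mono (hΦ : ConstraintsImply Φ' Φ) {A B : Interval} (h : semEqI φ Φ A B) :
    semEqI φ' Φ' A B := fun ρ hρ => h ρ (hΦ ρ hρ)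

theorem capLe.refl : ∀ c : Cap, capLe φ Φ c c
  | .single J => semLe.refl (φ := φ) J
  | .intv I J => ⟨semLe.refl (φ := φ) I, semLe.refl (φ := φ) J⟩

theorem capLe.mono (hΦ : ConstraintsImply Φ' Φ) {c d : Cap} (h : capLe φ Φ c d) :
    capLe φ' Φ' c d := by
  cases c <;> cases d <;> simp only [capLe] at h ⊢
  · exact h.mono hΦ
  · exact h.mono hΦ
  · exact ⟨h.1.mono hΦ, h.2.mono hΦ⟩

theorem semIncl_addCap_zeroI_add (c : Cap) (B : Interval) :
    semIncl φ Φ ((zeroI.addCap c).add B) (B.addCap c) := by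
  intro ρ _
  cases c <;>
    simp [Interval.addCap, Interval.add, zeroI, Idx.eval, add_comm]

end Semantic

namespace UCongr

theorem nil_par {U : Usage} : UCongr (.par .nil U) U := parComm.trans parNil

theorem par_par_par_comm {U₁ U₂ V₁ V₂ : Usage} :
    UCongr ((U₁.par U₂).par (V₁.par V₂)) ((U₁.par V₁).par (U₂.par V₂)) :=
  parAssoc.symm.trans <| (parCtx refl <| parAssoc.trans <| (parCtx parComm refl).trans
    parAssoc.symm).trans parAssoc

end UCongr

namespace SubU

variable {φ φ' : Finset IVar} {Φ Φ' : CSet}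

protected theorem refl : ∀ U : Usage, SubU φ Φ U U
  | .nil => toNil
  | .par U _ => parCtx (SubU.refl U)
  | .inp _ _ U => inpCtx (SubU.refl U)
  | .out _ _ U => outCtx (SubU.refl U)
  | .bang U => bangCtx (SubU.refl U)
  | .choice U _ => choiceCtxL (SubU.refl U)

theorem of_congr {U V : Usage} (h : UCongr U V) : SubU φ Φ U V :=
  congr h (SubU.refl V) .refl

theorem par_drop_left {U V : Usage} : SubU φ Φ (.par U V) V :=
  congr .refl (parCtx toNil) UCongr.nil_par

theorem par_drop_right {U V : Usage} : SubU φ Φ (.par U V) U :=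
  congr .parComm par_drop_left .refl

theorem par_mono {U U' V V' : Usage} (hU : SubU φ Φ U U') (hV : SubU φ Φ V V') :
    SubU φ Φ (.par U V) (.par U' V') :=
  (parCtx hU).trans (congr .parComm (parCtx hV) .parComm)

theorem mono (hΦ : ConstraintsImply Φ' Φ) {U V : Usage} (h : SubU φ Φ U V) :
    SubU φ' Φ' U V := by
  induction h with
  | toNil => exact toNil
  | choiceElimL => exact choiceElimL
  | choiceElimR => exact choiceElimR
  | choiceCtxL _ ih => exact choiceCtxL ih
  | choiceCtxR _ ih => exact choiceCtxR ih
  | parCtx _ ih => exact parCtx ih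
  | bangCtx _ ih => exact bangCtx ih
  | congr h₁ _ h₃ ih => exact congr h₁ ih h₃
  | trans _ _ ih₁ ih₂ => exact ih₁.trans ih₂
  | inpCtx _ ih => exact inpCtx ih
  | outCtx _ ih => exact outCtx ih
  | inpWeak h₁ h₂ => exact inpWeak (h₁.mono hΦ) (h₂.mono hΦ)
  | outWeak h₁ h₂ => exact outWeak (h₁.mono hΦ) (h₂.mono hΦ)
  | inpScope => exact inpScope
  | outScope => exact outScope

theorem delayCap_le_delay (c : Cap) :
    ∀ U : Usage, SubU φ Φ (U.delayCap c) (U.delay (zeroI.addCap c))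
  | .nil => toNil
  | .par U V => par_mono (delayCap_le_delay c U) (delayCap_le_delay c V)
  | .inp B d _ => inpWeak (semIncl_addCap_zeroI_add c B) (capLe.refl d)
  | .out B d _ => outWeak (semIncl_addCap_zeroI_add c B) (capLe.refl d)
  | .bang U => bangCtx (delayCap_le_delay c U)
  | .choice U V =>
      (choiceCtxL (delayCap_le_delay c U)).trans (choiceCtxR (delayCap_le_delay c V))

theorem inp_par_scope {jc : Cap} {U X : Usage} :
    SubU φ Φ (.par (.inp zeroI jc U) (X.delayCap jc)) (.inp zeroI jc (.par U X)) :=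
  (par_mono (SubU.refl _) (delayCap_le_delay jc X)).trans inpScope

theorem out_par_scope {jc : Cap} {U X : Usage} :
    SubU φ Φ (.par (.out zeroI jc U) (X.delayCap jc)) (.out zeroI jc (.par U X)) :=
  (par_mono (SubU.refl _) (delayCap_le_delay jc X)).trans outScope

theorem inp_par_scope' {jc : Cap} {U X : Usage} :
    SubU φ Φ (.par (X.delayCap jc) (.inp zeroI jc U)) (.inp zeroI jc (.par U X)) :=
  congr .parComm inp_par_scope .refl

theorem bang_par_scope {jc : Cap} {U X : Usage} :
    SubU φ Φ (.par (.bang (.inp zeroI jc U)) (.bang (X.delayCap jc)))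
      (.bang (.inp zeroI jc (.par U X))) :=
  (of_congr UCongr.bangPar.symm).trans (bangCtx inp_par_scope)

theorem bang_par_scope' {jc : Cap} {U X : Usage} :
    SubU φ Φ (.par (.bang (X.delayCap jc)) (.bang (.inp zeroI jc U)))
      (.bang (.inp zeroI jc (.par U X))) :=
  (of_congr UCongr.bangPar.symm).trans (bangCtx inp_par_scope')

theorem out_par_par_scope {jc : Cap} {U V Z₁ Z₂ : Usage} :
    SubU φ Φ (.par (.out zeroI jc (V.par U)) ((Z₁.par Z₂).delayCap jc))
      (.out zeroI jc ((V.par Z₂).par (U.par Z₁))) :=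
  out_par_scope.trans <| outCtx <| of_congr <|
    (UCongr.parCtx .refl .parComm).trans UCongr.par_par_par_comm

theorem out_par_par_scope' {jc : Cap} {U V Z₁ Z₂ : Usage} :
    SubU φ Φ (.par ((Z₁.par Z₂).delayCap jc) (.out zeroI jc (V.par U)))
      (.out zeroI jc ((V.par Z₂).par (U.par Z₁))) :=
  congr .parComm out_par_par_scope .refl

end SubU

theorem _root_.List.forall₂_trans_of_mem {α : Type*} {R : α → α → Prop} :
    ∀ {l₁ l₂ l₃ : List α}, (∀ b ∈ l₂, ∀ a c, R a b → R b c → R a c) →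
      List.Forall₂ R l₁ l₂ → List.Forall₂ R l₂ l₃ → List.Forall₂ R l₁ l₃
  | _, _, _, _, .nil, .nil => .nil
  | _, _, _, H, .cons h₁ t₁, .cons h₂ t₂ =>
      .cons (H _ List.mem_cons_self _ _ h₁ h₂)
        (List.forall₂_trans_of_mem (fun b hb => H b (List.mem_cons_of_mem _ hb)) t₁ t₂)

theorem _root_.List.forall_mem_zip_map_left {α β γ : Type*} {g : α → γ} {P : γ → β → Prop}
    {l₁ : List α} {l₂ : List β} (h : ∀ p ∈ l₁.zip l₂, P (g p.1) p.2) :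
    ∀ p ∈ (l₁.map g).zip l₂, P p.1 p.2 := by
  simp only [List.zip_map_left, List.mem_map]
  rintro _ ⟨q, hq, rfl⟩
  exact h q hq

def TysEquiv (φ : Finset IVar) (Φ : CSet) (Ss Ts : List Ty) : Prop :=
  List.Forall₂ (Sub φ Φ) Ss Ts ∧ List.Forall₂ (Sub φ Φ) Ts Ss

namespace Sub

variable {φ φ' : Finset IVar} {Φ Φ' : CSet}

theorem ch_of {Ss Ts : List Ty} {U V : Usage} (h : TysEquiv φ Φ Ss Ts) (hU : SubU φ Φ U V) :
    Sub φ Φ (.ch Ss U) (.ch Ts V) :=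
  ch h.1.length_eq (fun _ hp => List.forall₂_zip h.1 hp) (fun _ hp => List.forall₂_zip h.2 hp) hU

theorem serv_of {bs : List IVar} {K K' : Interval} {Ss Ts : List Ty} {U V : Usage}
    (h : TysEquiv (φ ∪ bs.toFinset) Φ Ss Ts) (hK : semEqI (φ ∪ bs.toFinset) Φ K K')
    (hU : SubU φ Φ U V) : Sub φ Φ (.serv bs K Ss U) (.serv bs K' Ts V) :=
  serv h.1.length_eq (fun _ hp => List.forall₂_zip h.1 hp)
    (fun _ hp => List.forall₂_zip h.2 hp) hK hU

theorem exists_of_ch {Ss : List Ty} {U : Usage} {B : Ty} (h : Sub φ Φ (.ch Ss U) B) :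
    ∃ Ts V, B = .ch Ts V ∧ TysEquiv φ Φ Ss Ts ∧ SubU φ Φ U V := by
  cases h with
  | ch hlen f g hU =>
    exact ⟨_, _, rfl, ⟨List.forall₂_iff_zip.2 ⟨hlen, fun hp => f _ hp⟩,
      List.forall₂_iff_zip.2 ⟨hlen.symm, fun hp => g _ hp⟩⟩, hU⟩

theorem exists_of_serv {bs : List IVar} {K : Interval} {Ss : List Ty} {U : Usage} {B : Ty}
    (h : Sub φ Φ (.serv bs K Ss U) B) :
    ∃ K' Ts V, B = .serv bs K' Ts V ∧ TysEquiv (φ ∪ bs.toFinset) Φ Ss Ts ∧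
      semEqI (φ ∪ bs.toFinset) Φ K K' ∧ SubU φ Φ U V := by
  cases h with
  | serv hlen f g hK hU =>
    exact ⟨_, _, _, rfl, ⟨List.forall₂_iff_zip.2 ⟨hlen, fun hp => f _ hp⟩,
      List.forall₂_iff_zip.2 ⟨hlen.symm, fun hp => g _ hp⟩⟩, hK, hU⟩

protected theorem refl : ∀ {φ : Finset IVar} (T : Ty), Sub φ Φ T T
  | _, .nat I J => nat (semLe.refl I) (semLe.refl J)
  | _, .ch Ts U =>
      have h : List.Forall₂ (Sub _ Φ) Ts Ts := List.forall₂_same.2 fun T hT =>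
        have := List.sizeOf_lt_of_mem hT
        Sub.refl T
      ch_of ⟨h, h⟩ (SubU.refl U)
  | _, .serv bs K Ts U =>
      have h : List.Forall₂ (Sub _ Φ) Ts Ts := List.forall₂_same.2 fun T hT =>
        have := List.sizeOf_lt_of_mem hT
        Sub.refl T
      serv_of ⟨h, h⟩ (semEqI.refl K) (SubU.refl U)

-- Recursion on the middle type: the contravariant half of the `ch` and `serv` rules
-- makes induction on either derivation insufficient.
protected theorem trans : ∀ {φ : Finset IVar} {A : Ty} (B : Ty) {C : Ty},
    Sub φ Φ A B → Sub φ Φ B C → Sub φ Φ A C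
  | _, _, .nat _ _, _, .nat h₁ h₂, .nat h₃ h₄ => nat (h₃.trans h₁) (h₂.trans h₄)
  | φ, .ch _ _, .ch Ts V, _, hAB, hBC => by
      have H : ∀ T ∈ Ts, ∀ A C, Sub φ Φ A T → Sub φ Φ T C → Sub φ Φ A C := fun T hT _ _ =>
        have := List.sizeOf_lt_of_mem hT
        Sub.trans T
      obtain ⟨_, _, ⟨⟩, hE₁, hU₁⟩ := exists_of_ch hAB
      obtain ⟨_, _, rfl, hE₂, hU₂⟩ := exists_of_ch hBC
      exact ch_of ⟨List.forall₂_trans_of_mem H hE₁.1 hE₂.1,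
        List.forall₂_trans_of_mem H hE₂.2 hE₁.2⟩ (hU₁.trans hU₂)
  | φ, .serv _ _ _ _, .serv bs K Ts V, _, hAB, hBC => by
      have H : ∀ T ∈ Ts, ∀ A C, Sub (φ ∪ bs.toFinset) Φ A T → Sub (φ ∪ bs.toFinset) Φ T C →
          Sub (φ ∪ bs.toFinset) Φ A C := fun T hT _ _ =>
        have := List.sizeOf_lt_of_mem hT
        Sub.trans T
      obtain ⟨_, _, _, ⟨⟩, hE₁, hK₁, hU₁⟩ := exists_of_serv hAB
      obtain ⟨_, _, _, rfl, hE₂, hK₂, hU₂⟩ := exists_of_serv hBC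
      exact serv_of ⟨List.forall₂_trans_of_mem H hE₁.1 hE₂.1,
          List.forall₂_trans_of_mem H hE₂.2 hE₁.2⟩ (hK₁.trans hK₂) (hU₁.trans hU₂)
termination_by _ _ B => B

theorem mono (hΦ : ConstraintsImply Φ' Φ) {A B : Ty} (h : Sub φ Φ A B) : Sub φ' Φ' A B := by
  induction h generalizing φ' with
  | nat h₁ h₂ => exact nat (h₁.mono hΦ) (h₂.mono hΦ)
  | ch hlen _ _ hU ihf ihg =>
      exact ch hlen (fun p hp => ihf p hp hΦ) (fun p hp => ihg p hp hΦ) (hU.mono hΦ)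
  | serv hlen _ _ hK hU ihf ihg =>
      exact serv hlen (fun p hp => ihf p hp hΦ) (fun p hp => ihg p hp hΦ) (hK.mono hΦ) (hU.mono hΦ)

end Sub

namespace TysEquiv

variable {φ φ' : Finset IVar} {Φ Φ' : CSet}

protected theorem refl (Ts : List Ty) : TysEquiv φ Φ Ts Ts :=
  have h := List.forall₂_same.2 fun T (_ : T ∈ Ts) => Sub.refl (φ := φ) (Φ := Φ) T
  ⟨h, h⟩

theorem symm {Ss Ts : List Ty} (h : TysEquiv φ Φ Ss Ts) : TysEquiv φ Φ Ts Ss := ⟨h.2, h.1⟩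

theorem trans {Ss Ts Us : List Ty} (h₁ : TysEquiv φ Φ Ss Ts) (h₂ : TysEquiv φ Φ Ts Us) :
    TysEquiv φ Φ Ss Us :=
  ⟨List.forall₂_trans_of_mem (fun T _ _ _ => Sub.trans T) h₁.1 h₂.1,
    List.forall₂_trans_of_mem (fun T _ _ _ => Sub.trans T) h₂.2 h₁.2⟩

theorem mono (hΦ : ConstraintsImply Φ' Φ) {Ss Ts : List Ty} (h : TysEquiv φ Φ Ss Ts) :
    TysEquiv φ' Φ' Ss Ts :=
  ⟨h.1.imp fun _ _ => Sub.mono hΦ, h.2.imp fun _ _ => Sub.mono hΦ⟩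

end TysEquiv

def Ty.IsNat : Ty → Prop
  | .nat _ _ => True
  | _ => False

theorem Sub.isNat_iff {φ : Finset IVar} {Φ : CSet} {A B : Ty} (h : Sub φ Φ A B) :
    A.IsNat ↔ B.IsNat := by
  cases h <;> rfl

theorem TyPar.sub_left {φ : Finset IVar} {Φ : CSet} {A B C : Ty} (h : TyPar A B C) :
    Sub φ Φ C A := by
  cases h with
  | nat => exact Sub.refl _
  | ch => exact Sub.ch_of (.refl _) SubU.par_drop_right
  | serv => exact Sub.serv_of (.refl _) (semEqI.refl _) SubU.par_drop_right

namespace Ctx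

def minus (Γ : Ctx) (a : Name) : Ctx := fun x => if x = a then none else Γ x

def only (y : Name) (R : Ty) : Ctx := fun x => if x = y then some R else none

def merge (Γ : Ctx) (v y : Name) (R : Ty) : Ctx := (Γ.minus v).update y R

variable {Γ Γ' : Ctx} {a v y x : Name} {A R : Ty} {xs : List Name} {Ts : List Ty}

@[simp] theorem update_apply : Γ.update a A x = if x = a then some A else Γ x := rfl

@[simp] theorem minus_apply : Γ.minus a x = if x = a then none else Γ x := rfl

@[simp] theorem only_apply : Ctx.only y R x = if x = y then some R else none := rfl

@[simp] theorem tmap_apply {f : Ty → Ty} : Γ.tmap f x = (Γ x).map f := rfl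

@[simp] theorem merge_apply :
    Γ.merge v y R x = if x = y then some R else if x = v then none else Γ x := rfl

theorem extend_cons {T : Ty} : Γ.extend (a :: xs) (T :: Ts) = (Γ.update a T).extend xs Ts :=
  rfl

theorem extend_apply_of_not_mem (h : x ∉ xs) : Γ.extend xs Ts x = Γ x := by
  induction xs generalizing Γ Ts with
  | nil => rfl
  | cons a xs ih =>
    cases Ts with
    | nil => rfl
    | cons T Ts =>
      rw [extend_cons, ih (List.not_mem_of_not_mem_cons h), update_apply,
        if_neg (List.ne_of_not_mem_cons h)]

theorem extend_apply_congr (h : Γ x = Γ' x) : Γ.extend xs Ts x = Γ'.extend xs Ts x := by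
  induction xs generalizing Γ Γ' Ts with
  | nil => exact h
  | cons a xs ih =>
    cases Ts with
    | nil => exact h
    | cons T Ts => exact ih (by simp [h])

theorem minus_extend (hv : v ∉ xs) : (Γ.extend xs Ts).minus v = (Γ.minus v).extend xs Ts := by
  funext x
  by_cases hx : x ∈ xs
  · have hxv : x ≠ v := fun h => hv (h ▸ hx)
    rw [minus_apply, if_neg hxv]
    exact extend_apply_congr (by simp [hxv])
  · simp [extend_apply_of_not_mem hx]

theorem merge_extend (hv : v ∉ xs) (hy : y ∉ xs) :
    (Γ.extend xs Ts).merge v y R = (Γ.merge v y R).extend xs Ts := by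
  funext x
  by_cases hx : x ∈ xs
  · have hxv : x ≠ v := fun h => hv (h ▸ hx)
    have hxy : x ≠ y := fun h => hy (h ▸ hx)
    rw [merge_apply, if_neg hxy, if_neg hxv]
    exact extend_apply_congr (by simp [hxv, hxy])
  · simp [extend_apply_of_not_mem hx]

theorem minus_update_of_ne (h : a ≠ v) : (Γ.update a A).minus v = (Γ.minus v).update a A := by
  funext x; by_cases hx : x = a <;> simp_all

theorem minus_update_self : (Γ.update v A).minus v = Γ.minus v := by
  funext x; by_cases hx : x = v <;> simp_all

theorem minus_of_eq_none (h : Γ v = none) : Γ.minus v = Γ := by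
  funext x; by_cases hx : x = v <;> simp_all

theorem minus_tmap {f : Ty → Ty} : (Γ.tmap f).minus v = (Γ.minus v).tmap f := by
  funext x; by_cases hx : x = v <;> simp_all

theorem merge_update_of_ne (hv : a ≠ v) (hy : a ≠ y) :
    (Γ.update a A).merge v y R = (Γ.merge v y R).update a A := by
  funext x; by_cases hx : x = a <;> simp_all

theorem merge_update_left : (Γ.update v A).merge v y R = Γ.merge v y R := by
  funext x; by_cases hx : x = v <;> simp_all

theorem merge_update_right : (Γ.update y A).merge v y R = Γ.merge v y R := by
  funext x; by_cases hx : x = y <;> simp_all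

theorem merge_tmap {f : Ty → Ty} : (Γ.tmap f).merge v y (f R) = (Γ.merge v y R).tmap f := by
  funext x; by_cases hx : x = y <;> by_cases hx' : x = v <;> simp_all

theorem merge_eq_update : Γ.merge v y R = ((Γ.minus v).minus y).update y R := by
  funext x; by_cases hx : x = y <;> simp_all

theorem exists_of_tmap_eq_some {F : Ty → Ty} {T : Ty}
    (h : Γ.tmap F x = some T) : ∃ T₀, Γ x = some T₀ ∧ F T₀ = T :=
  Option.map_eq_some_iff.1 h

theorem tmap_tmap {F G : Ty → Ty} : (Γ.tmap F).tmap G = Γ.tmap (G ∘ F) := by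
  funext x; simp [Option.map_map]

theorem update_eq_self (h : Γ y = some R) : Γ.update y R = Γ := by
  funext x; by_cases hx : x = y <;> simp_all

end Ctx

section CtxSub

variable {φ φ' : Finset IVar} {Φ Φ' : CSet}

theorem OptSub.refl : ∀ o : Option Ty, OptSub φ Φ o o
  | Option.none => .none
  | Option.some T => .some (Sub.refl T)

theorem OptSub.mono (hΦ : ConstraintsImply Φ' Φ) {o o' : Option Ty} (h : OptSub φ Φ o o') :
    OptSub φ' Φ' o o' := by
  cases h with
  | none => exact .none
  | some h => exact .some (h.mono hΦ)

namespace CtxSub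

variable {Γ Δ : Ctx}

protected theorem refl (Γ : Ctx) : CtxSub φ Φ Γ Γ := fun x => OptSub.refl (Γ x)

theorem mono (hΦ : ConstraintsImply Φ' Φ) (h : CtxSub φ Φ Γ Δ) : CtxSub φ' Φ' Γ Δ :=
  fun x => (h x).mono hΦ

theorem exists_of_left (h : CtxSub φ Φ Γ Δ) {x : Name} {T : Ty} (hx : Γ x = some T) :
    ∃ T', Δ x = some T' ∧ Sub φ Φ T T' := by
  have := h x
  rw [hx] at this
  generalize Δ x = o at this
  cases this with | some h => exact ⟨_, rfl, h⟩

theorem exists_of_right (h : CtxSub φ Φ Γ Δ) {x : Name} {T : Ty} (hx : Δ x = some T) :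
    ∃ T', Γ x = some T' ∧ Sub φ Φ T' T := by
  have := h x
  rw [hx] at this
  generalize Γ x = o at this
  cases this with | some h => exact ⟨_, rfl, h⟩

theorem update (h : CtxSub φ Φ Γ Δ) {a : Name} {A B : Ty} (hAB : Sub φ Φ A B) :
    CtxSub φ Φ (Γ.update a A) (Δ.update a B) := by
  intro x
  by_cases hx : x = a
  · simpa [hx] using OptSub.some hAB
  · simpa [hx] using h x

theorem minus (h : CtxSub φ Φ Γ Δ) (v : Name) : CtxSub φ Φ (Γ.minus v) (Δ.minus v) := by
  intro x
  by_cases hx : x = v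
  · simpa [hx] using OptSub.none
  · simpa [hx] using h x

theorem merge (h : CtxSub φ Φ Γ Δ) (v y : Name) {R R' : Ty} (hR : Sub φ Φ R R') :
    CtxSub φ Φ (Γ.merge v y R) (Δ.merge v y R') :=
  (h.minus v).update hR

end CtxSub

theorem PTy.cast {Γ Δ : Ctx} {P : Proc} {K : Interval} (h : PTy φ Φ Δ P K)
    (hs : CtxSub φ Φ Γ Δ) : PTy φ Φ Γ P K :=
  .sub h hs (semIncl.refl K)

theorem ETy.cast {Γ Δ : Ctx} {e : Expr} {T : Ty} (h : ETy φ Φ Δ e T)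
    (hs : CtxSub φ Φ Γ Δ) : ETy φ Φ Γ e T :=
  .sub h hs (Sub.refl T)

end CtxSub

namespace CtxPar

variable {Γ Δ Θ : Ctx}

theorem ctxSub_left {φ : Finset IVar} {Φ : CSet} (h : CtxPar Γ Δ Θ) : CtxSub φ Φ Θ Γ := by
  intro x
  have := h x
  generalize Γ x = o₁, Δ x = o₂, Θ x = o₃ at this ⊢
  cases this with
  | none => exact .none
  | some hp => exact .some hp.sub_left

theorem exists_of_some {x : Name} {T : Ty} (h : CtxPar Γ Δ Θ) (hx : Θ x = some T) :
    ∃ T₁ T₂, Γ x = some T₁ ∧ Δ x = some T₂ ∧ TyPar T₁ T₂ T := by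
  have := h x
  rw [hx] at this
  generalize Γ x = o₁, Δ x = o₂ at this ⊢
  cases this with | some hp => exact ⟨_, _, rfl, rfl, hp⟩

theorem exists_of_some_right {x : Name} {T : Ty} (h : CtxPar Γ Δ Θ) (hx : Δ x = some T) :
    ∃ T₁ T₃, Γ x = some T₁ ∧ Θ x = some T₃ ∧ TyPar T₁ T T₃ := by
  have := h x
  rw [hx] at this
  generalize Γ x = o₁, Θ x = o₃ at this ⊢
  cases this with | some hp => exact ⟨_, _, rfl, rfl, hp⟩

theorem eq_none_of_left {x : Name} (h : CtxPar Γ Δ Θ) (hx : Γ x = none) : Δ x = none := by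
  have := h x
  rw [hx] at this
  generalize Δ x = o₂, Θ x = o₃ at this ⊢
  cases this; rfl

theorem minus (h : CtxPar Γ Δ Θ) (v : Name) : CtxPar (Γ.minus v) (Δ.minus v) (Θ.minus v) := by
  intro x
  by_cases hx : x = v
  · simpa [hx] using OptPar.none
  · simpa [hx] using h x

theorem merge (h : CtxPar Γ Δ Θ) (v y : Name) {R₁ R₂ R : Ty} (hR : TyPar R₁ R₂ R) :
    CtxPar (Γ.merge v y R₁) (Δ.merge v y R₂) (Θ.merge v y R) := by
  intro x
  by_cases hx : x = y
  · simpa [hx] using OptPar.some hR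
  · simpa [hx] using h.minus v x

end CtxPar

theorem Expr.eq_of_mem_fv {e : Expr} {x x' : Name} (hx : x ∈ e.fv) (hx' : x' ∈ e.fv) :
    x = x' := by
  induction e with
  | var z => simp_all [Expr.fv]
  | zero => simp [Expr.fv] at hx
  | succ e ih => exact ih hx hx'

namespace ETy

variable {φ φ' : Finset IVar} {Φ Φ' : CSet} {Γ : Ctx} {e : Expr} {T : Ty}

theorem mono (hΦ : ConstraintsImply Φ' Φ) (h : ETy φ Φ Γ e T) : ETy φ' Φ' Γ e T := by
  induction h generalizing φ' with
  | var h => exact var h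
  | zero => exact zero
  | succ _ ih => exact succ (ih hΦ)
  | sub _ hΓ hT ih => exact sub (ih hΦ) (hΓ.mono hΦ) (hT.mono hΦ)

theorem of_fv_agree (h : ETy φ Φ Γ e T) {Γ' : Ctx} (hΓ : ∀ x ∈ e.fv, Γ' x = Γ x) :
    ETy φ Φ Γ' e T := by
  induction h generalizing Γ' with
  | var h => exact var ((hΓ _ (by simp [Expr.fv])).trans h)
  | zero => exact zero
  | succ _ ih => exact succ (ih hΓ)
  | @sub _ _ Δ e _ Γ _ _ hΓΔ hT ih =>
    refine sub (ih (Γ' := fun x => if x ∈ e.fv then Δ x else Γ' x) fun x hx => if_pos hx)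
      (fun x => ?_) hT
    by_cases hx : x ∈ e.fv
    · simpa [hx, hΓ x hx] using hΓΔ x
    · simpa [hx] using OptSub.refl (Γ' x)

theorem isSome_of_mem_fv (h : ETy φ Φ Γ e T) {x : Name} (hx : x ∈ e.fv) : (Γ x).isSome := by
  induction h with
  | var h => simp_all [Expr.fv]
  | zero => simp [Expr.fv] at hx
  | succ _ ih => exact ih hx
  | sub _ hΓΔ _ ih =>
    obtain ⟨S, hS⟩ := Option.isSome_iff_exists.1 (ih hx)
    obtain ⟨S', hS', -⟩ := hΓΔ.exists_of_right hS
    simp [hS']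

theorem var_inv {x : Name} (h : ETy φ Φ Γ (.var x) T) : ∃ S, Γ x = some S ∧ Sub φ Φ S T := by
  generalize hx : Expr.var x = e at h
  induction h with
  | var h => cases hx; exact ⟨_, h, Sub.refl _⟩
  | zero => cases hx
  | succ => cases hx
  | sub _ hΓΔ hT ih =>
    obtain ⟨S, hS, hST⟩ := ih hx
    obtain ⟨S', hS', hS'S⟩ := hΓΔ.exists_of_right hS
    exact ⟨S', hS', hS'S.trans _ (hST.trans _ hT)⟩

theorem exists_eq_var_of_not_isNat (h : ETy φ Φ Γ e T) (hT : ¬ T.IsNat) : ∃ x, e = .var x := by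
  induction h with
  | var => exact ⟨_, rfl⟩
  | zero => exact absurd trivial hT
  | succ => exact absurd trivial hT
  | sub _ _ hsub ih => exact ih (by rwa [hsub.isNat_iff])

theorem eq_var_of_mem_fv (h : ETy φ Φ Γ e T) {x : Name} (hx : x ∈ e.fv) {S : Ty}
    (hS : Γ x = some S) (hSnat : ¬ S.IsNat) : e = .var x ∧ Sub φ Φ S T := by
  induction h generalizing S with
  | var h =>
    simp only [Expr.fv, Finset.mem_singleton] at hx
    subst hx
    rw [h] at hS
    cases hS
    exact ⟨rfl, Sub.refl _⟩
  | zero => simp [Expr.fv] at hx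
  | succ _ ih =>
    exact absurd ((ih hx hS hSnat).2.isNat_iff.2 trivial) hSnat
  | sub _ hΓΔ hT ih =>
    obtain ⟨S', hS', hSS'⟩ := hΓΔ.exists_of_left hS
    obtain ⟨rfl, hS'T⟩ := ih hx hS' (by rwa [← hSS'.isNat_iff])
    exact ⟨rfl, hSS'.trans _ (hS'T.trans _ hT)⟩

theorem of_only {y : Name} {R : Ty} (h : ETy φ Φ (Ctx.only y R) e T) {Γ' : Ctx}
    (hy : Γ' y = some R) : ETy φ Φ Γ' e T := by
  refine h.of_fv_agree fun x hx => ?_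
  have := h.isSome_of_mem_fv hx
  by_cases hxy : x = y
  · simpa [hxy] using hy
  · simp [hxy] at this

end ETy

def Ty.mapUsage (f : Usage → Usage) : Ty → Ty
  | .nat I J => .nat I J
  | .ch Ts U => .ch Ts (f U)
  | .serv bs K Ts U => .serv bs K Ts (f U)

theorem Ty.mapUsage_id (T : Ty) : T.mapUsage id = T := by cases T <;> rfl

theorem Ty.delayI_eq_mapUsage (A : Interval) : Ty.delayI A = Ty.mapUsage (Usage.delay A) := by
  funext T; cases T <;> rfl

theorem Ty.delayC_eq_mapUsage (c : Cap) : Ty.delayC c = Ty.mapUsage (Usage.delayCap c) := by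
  funext T; cases T <;> rfl

theorem Ty.delayC_comp_bangT (c : Cap) :
    Ty.delayC c ∘ Ty.bangT = Ty.mapUsage (fun U => (Usage.bang U).delayCap c) := by
  funext T; cases T <;> rfl

theorem Ctx.eq_nat_of_tmap_mapUsage {f : Usage → Usage} {Γ : Ctx} {x : Name} {I J : Idx}
    (h : Γ.tmap (Ty.mapUsage f) x = some (.nat I J)) : Γ x = some (.nat I J) := by
  obtain ⟨T, hT, hTnat⟩ := Ctx.exists_of_tmap_eq_some h
  cases T <;> simp_all [Ty.mapUsage]

/-- `MergeTy φ Φ y e R S T`: once a variable `v : T` is replaced by `e`, whose only free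
variable is `y`, the variable `y : S` may be given the type `R`. For a channel or a server
this forces `e = y`, and `R` must provide the usages of both `S` and `T`; for an integer,
`R` refines `S` and types `e`. -/
inductive MergeTy (φ : Finset IVar) (Φ : CSet) (y : Name) : Expr → Ty → Ty → Ty → Prop
  | nat {e : Expr} {I J I' J' I₂ J₂ : Idx} : semLe φ Φ I' I → semLe φ Φ J J' →
      ETy φ Φ (Ctx.only y (.nat I J)) e (.nat I₂ J₂) →
      MergeTy φ Φ y e (.nat I J) (.nat I' J') (.nat I₂ J₂)
  | ch {Rs Ss Ts : List Ty} {W W₁ U : Usage} : TysEquiv φ Φ Rs Ss → TysEquiv φ Φ Rs Ts →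
      SubU φ Φ W (W₁.par U) → MergeTy φ Φ y (.var y) (.ch Rs W) (.ch Ss W₁) (.ch Ts U)
  | serv {bs : List IVar} {KR K₁ K₂ : Interval} {Rs Ss Ts : List Ty} {W W₁ U : Usage} :
      TysEquiv (φ ∪ bs.toFinset) Φ Rs Ss → TysEquiv (φ ∪ bs.toFinset) Φ Rs Ts →
      semEqI (φ ∪ bs.toFinset) Φ KR K₁ → semEqI (φ ∪ bs.toFinset) Φ KR K₂ →
      SubU φ Φ W (W₁.par U) →
      MergeTy φ Φ y (.var y) (.serv bs KR Rs W) (.serv bs K₁ Ss W₁) (.serv bs K₂ Ts U)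

namespace MergeTy

variable {φ φ' : Finset IVar} {Φ Φ' : CSet} {y : Name} {e : Expr} {R S T : Ty}

theorem mono (hΦ : ConstraintsImply Φ' Φ) (h : MergeTy φ Φ y e R S T) :
    MergeTy φ' Φ' y e R S T := by
  cases h with
  | nat h₁ h₂ he => exact nat (h₁.mono hΦ) (h₂.mono hΦ) (he.mono hΦ)
  | ch h₁ h₂ hW => exact ch (h₁.mono hΦ) (h₂.mono hΦ) (hW.mono hΦ)
  | serv h₁ h₂ hK₁ hK₂ hW =>
    exact serv (h₁.mono hΦ) (h₂.mono hΦ) (hK₁.mono hΦ) (hK₂.mono hΦ) (hW.mono hΦ)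

theorem sub_left (h : MergeTy φ Φ y e R S T) : Sub φ Φ R S := by
  cases h with
  | nat h₁ h₂ => exact Sub.nat h₁ h₂
  | ch h₁ _ hW => exact Sub.ch_of h₁ (hW.trans SubU.par_drop_right)
  | serv h₁ _ hK₁ _ hW => exact Sub.serv_of h₁ hK₁ (hW.trans SubU.par_drop_right)

theorem ety (h : MergeTy φ Φ y e R S T) {Γ : Ctx} (hy : Γ y = some R) : ETy φ Φ Γ e T := by
  cases h with
  | nat _ _ he => exact he.of_only hy
  | ch _ h₂ hW => exact .sub (.var hy) (.refl Γ) (Sub.ch_of h₂ (hW.trans SubU.par_drop_left))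
  | serv _ h₂ _ hK₂ hW =>
    exact .sub (.var hy) (.refl Γ) (Sub.serv_of h₂ hK₂ (hW.trans SubU.par_drop_left))

theorem of_sub (h : MergeTy φ Φ y e R S T) {S' T' : Ty} (hS : Sub φ Φ S S')
    (hT : Sub φ Φ T T') : ∃ R', MergeTy φ Φ y e R' S' T' ∧ Sub φ Φ R R' := by
  cases h with
  | nat h₁ h₂ he =>
    cases hS with | nat h₃ h₄ =>
    cases hT with | nat h₅ h₆ =>
    exact ⟨_, nat (h₃.trans h₁) (h₂.trans h₄) (.sub he (.refl _) (.nat h₅ h₆)), Sub.refl _⟩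
  | ch h₁ h₂ hW =>
    obtain ⟨_, _, rfl, hS₁, hS₂⟩ := Sub.exists_of_ch hS
    obtain ⟨_, _, rfl, hT₁, hT₂⟩ := Sub.exists_of_ch hT
    exact ⟨_, ch (h₁.trans hS₁) (h₂.trans hT₁) (SubU.refl _),
      Sub.ch_of (.refl _) (hW.trans (SubU.par_mono hS₂ hT₂))⟩
  | serv h₁ h₂ hK₁ hK₂ hW =>
    obtain ⟨_, _, _, rfl, hS₁, hSK, hS₂⟩ := Sub.exists_of_serv hS
    obtain ⟨_, _, _, rfl, hT₁, hTK, hT₂⟩ := Sub.exists_of_serv hT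
    exact ⟨_, serv (h₁.trans hS₁) (h₂.trans hT₁) (hK₁.trans hSK) (hK₂.trans hTK) (SubU.refl _),
      Sub.serv_of (.refl _) (semEqI.refl _) (hW.trans (SubU.par_mono hS₂ hT₂))⟩

theorem of_mapUsage {f : Usage → Usage} (hf : ∀ U V, SubU φ Φ ((f U).par (f V)) (f (U.par V)))
    (h : MergeTy φ Φ y e R (S.mapUsage f) (T.mapUsage f)) :
    ∃ R₀, MergeTy φ Φ y e R₀ S T ∧ Sub φ Φ R (R₀.mapUsage f) := by
  generalize hS : S.mapUsage f = S' at h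
  generalize hT : T.mapUsage f = T' at h
  cases h with
  | nat h₁ h₂ he =>
    cases S <;> cases hS
    cases T <;> cases hT
    exact ⟨_, nat h₁ h₂ he, Sub.refl _⟩
  | ch h₁ h₂ hW =>
    cases S <;> cases hS
    cases T <;> cases hT
    exact ⟨_, ch h₁ h₂ (SubU.refl _), Sub.ch_of (.refl _) (hW.trans (hf _ _))⟩
  | serv h₁ h₂ hK₁ hK₂ hW =>
    cases S <;> cases hS
    cases T <;> cases hT
    exact ⟨_, serv h₁ h₂ hK₁ hK₂ (SubU.refl _),
      Sub.serv_of (.refl _) (semEqI.refl _) (hW.trans (hf _ _))⟩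

theorem split_mapUsage {f : Usage → Usage} (hf : ∀ U V, f (U.par V) = (f U).par (f V))
    (h : MergeTy φ Φ y e R (S.mapUsage f) (T.mapUsage f)) {S₁ S₂ T₁ T₂ : Ty}
    (hS : TyPar S₁ S₂ S) (hT : TyPar T₁ T₂ T) :
    ∃ R₁ R₂ R₀, MergeTy φ Φ y e R₁ S₁ T₁ ∧ MergeTy φ Φ y e R₂ S₂ T₂ ∧ TyPar R₁ R₂ R₀ ∧
      Sub φ Φ R (R₀.mapUsage f) := by
  have hshuffle : ∀ X₁ X₂ U₁ U₂ : Usage, SubU φ Φ ((f (X₁.par X₂)).par (f (U₁.par U₂)))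
      (f ((X₁.par U₁).par (X₂.par U₂))) := fun _ _ _ _ => by
    simpa only [hf] using SubU.of_congr UCongr.par_par_par_comm
  generalize hS₀ : S.mapUsage f = S' at h
  generalize hT₀ : T.mapUsage f = T' at h
  cases h with
  | nat h₁ h₂ he =>
    cases hS <;> cases hS₀
    cases hT <;> cases hT₀
    exact ⟨_, _, _, nat h₁ h₂ he, nat h₁ h₂ he, .nat, Sub.refl _⟩
  | ch h₁ h₂ hW =>
    cases hS <;> cases hS₀
    cases hT <;> cases hT₀
    exact ⟨_, _, _, ch h₁ h₂ (SubU.refl _), ch h₁ h₂ (SubU.refl _), .ch,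
      Sub.ch_of (.refl _) (hW.trans (hshuffle _ _ _ _))⟩
  | serv h₁ h₂ hK₁ hK₂ hW =>
    cases hS <;> cases hS₀
    cases hT <;> cases hT₀
    exact ⟨_, _, _, serv h₁ h₂ hK₁ hK₂ (SubU.refl _), serv h₁ h₂ hK₁ hK₂ (SubU.refl _), .serv,
      Sub.serv_of (.refl _) (semEqI.refl _) (hW.trans (hshuffle _ _ _ _))⟩

theorem split (h : MergeTy φ Φ y e R S T) {S₁ S₂ T₁ T₂ : Ty} (hS : TyPar S₁ S₂ S)
    (hT : TyPar T₁ T₂ T) :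
    ∃ R₁ R₂ R₀, MergeTy φ Φ y e R₁ S₁ T₁ ∧ MergeTy φ Φ y e R₂ S₂ T₂ ∧ TyPar R₁ R₂ R₀ ∧
      Sub φ Φ R R₀ := by
  simpa only [Ty.mapUsage_id] using
    split_mapUsage (f := id) (fun _ _ => rfl) (by simpa only [Ty.mapUsage_id] using h) hS hT

theorem of_tmap {v : Name} {F : Ty → Ty} {f : Usage → Usage} (hF : F = Ty.mapUsage f)
    (hf : ∀ U V, SubU φ Φ ((f U).par (f V)) (f (U.par V))) {Γ : Ctx}
    (hv : Γ.tmap F v = some T) (hy : Γ.tmap F y = some S) (hm : MergeTy φ Φ y e R S T) :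
    ∃ T₀ S₀ R₀, Γ v = some T₀ ∧ Γ y = some S₀ ∧ MergeTy φ Φ y e R₀ S₀ T₀ ∧ Sub φ Φ R (F R₀) := by
  obtain ⟨T₀, hv₀, rfl⟩ := Ctx.exists_of_tmap_eq_some hv
  obtain ⟨S₀, hy₀, rfl⟩ := Ctx.exists_of_tmap_eq_some hy
  subst hF
  obtain ⟨R₀, hm₀, hR⟩ := hm.of_mapUsage hf
  exact ⟨T₀, S₀, R₀, hv₀, hy₀, hm₀, hR⟩

theorem split_tmap {v : Name} {F : Ty → Ty} {f : Usage → Usage} (hF : F = Ty.mapUsage f)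
    (hf : ∀ U V, f (U.par V) = (f U).par (f V)) {Γ Γ' Θ : Ctx} (hpar : CtxPar Γ Γ' Θ)
    (hv : Θ.tmap F v = some T) (hy : Θ.tmap F y = some S) (hm : MergeTy φ Φ y e R S T) :
    ∃ T₁ T₂ S₁ S₂ R₁ R₂ R₀, Γ v = some T₁ ∧ Γ' v = some T₂ ∧ Γ y = some S₁ ∧
      Γ' y = some S₂ ∧ MergeTy φ Φ y e R₁ S₁ T₁ ∧ MergeTy φ Φ y e R₂ S₂ T₂ ∧
      TyPar R₁ R₂ R₀ ∧ Sub φ Φ R (F R₀) := by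
  obtain ⟨T₀, hv₀, rfl⟩ := Ctx.exists_of_tmap_eq_some hv
  obtain ⟨S₀, hy₀, rfl⟩ := Ctx.exists_of_tmap_eq_some hy
  obtain ⟨T₁, T₂, hv₁, hv₂, hT⟩ := hpar.exists_of_some hv₀
  obtain ⟨S₁, S₂, hy₁, hy₂, hS⟩ := hpar.exists_of_some hy₀
  subst hF
  obtain ⟨R₁, R₂, R₀, hm₁, hm₂, hR, hRR₀⟩ := hm.split_mapUsage hf hS hT
  exact ⟨T₁, T₂, S₁, S₂, R₁, R₂, R₀, hv₁, hv₂, hy₁, hy₂, hm₁, hm₂, hR, hRR₀⟩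

theorem of_tyPar {Sy SΓ SΘ : Ty} (he : ETy φ Φ (Ctx.only y Sy) e T) (hy : y ∈ e.fv)
    (hp : TyPar SΓ Sy SΘ) : MergeTy φ Φ y e SΘ SΓ T := by
  cases hp with
  | nat =>
    have hT : T.IsNat := by
      by_contra hT
      obtain ⟨x, rfl⟩ := he.exists_eq_var_of_not_isNat hT
      obtain ⟨S, hS, hST⟩ := he.var_inv
      by_cases hx : x = y
      · simp only [Ctx.only_apply, hx, if_true, Option.some.injEq] at hS
        subst hS
        exact hT (hST.isNat_iff.1 trivial)
      · simp [hx] at hS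
    cases T with
    | nat => exact nat (semLe.refl _) (semLe.refl _) he
    | _ => exact hT.elim
  | @ch Ts U V =>
    obtain ⟨rfl, hST⟩ := he.eq_var_of_mem_fv hy (S := .ch Ts V) (by simp) (fun h => h)
    obtain ⟨_, _, rfl, hE, hU⟩ := Sub.exists_of_ch hST
    exact ch (.refl _) hE (SubU.par_mono (SubU.refl _) hU)
  | @serv bs K Ts U V =>
    obtain ⟨rfl, hST⟩ := he.eq_var_of_mem_fv hy (S := .serv bs K Ts V) (by simp) (fun h => h)
    obtain ⟨_, _, _, rfl, hE, hK, hU⟩ := Sub.exists_of_serv hST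
    exact serv (.refl _) hE (semEqI.refl _) hK (SubU.par_mono (SubU.refl _) hU)

end MergeTy

namespace ETy

variable {φ : Finset IVar} {Φ : CSet} {Ξ : Ctx} {e' e : Expr} {T' T : Ty} {v : Name}

theorem subst_closed (h : ETy φ Φ Ξ e' T') (hv : Ξ v = some T) (he : ∀ Γ, ETy φ Φ Γ e T) :
    ETy φ Φ (Ξ.minus v) (e'.subst v e) T' := by
  induction h generalizing T with
  | @var Γ _ _ _ x hx =>
    by_cases hxv : x = v
    · subst hxv
      rw [hx] at hv
      cases hv
      simpa [Expr.subst] using he _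
    · simpa [Expr.subst, hxv] using var (Γ := Γ.minus v) (by simpa [hxv] using hx)
  | zero => exact zero
  | succ _ ih => exact succ (ih hv he)
  | sub _ hΓΔ hsub ih =>
    obtain ⟨T₂, hv₂, hTT₂⟩ := hΓΔ.exists_of_left hv
    exact sub (ih hv₂ fun Γ => sub (he Γ) (.refl Γ) hTT₂) (hΓΔ.minus v) hsub

theorem subst_merge (h : ETy φ Φ Ξ e' T') {y : Name} {S R : Ty} (hvy : v ≠ y)
    (hv : Ξ v = some T) (hy : Ξ y = some S) (hm : MergeTy φ Φ y e R S T) :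
    ETy φ Φ (Ξ.merge v y R) (e'.subst v e) T' := by
  induction h generalizing T S R with
  | @var Γ _ _ _ x hx =>
    by_cases hxv : x = v
    · subst hxv
      rw [hx] at hv
      cases hv
      simpa [Expr.subst] using hm.ety (by simp)
    · by_cases hxy : x = y
      · subst hxy
        rw [hx] at hy
        cases hy
        simpa [Expr.subst, hxv] using sub (var (by simp)) (.refl _) hm.sub_left
      · simpa [Expr.subst, hxv] using var (Γ := Γ.merge v y R) (by simpa [hxv, hxy] using hx)
  | zero => exact zero
  | succ _ ih => exact succ (ih hv hy hm)
  | sub _ hΓΔ hsub ih =>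
    obtain ⟨T₂, hv₂, hTT₂⟩ := hΓΔ.exists_of_left hv
    obtain ⟨S₂, hy₂, hSS₂⟩ := hΓΔ.exists_of_left hy
    obtain ⟨R₂, hm₂, hRR₂⟩ := hm.of_sub hSS₂ hTT₂
    exact sub (ih hv₂ hy₂ hm₂) (hΓΔ.merge v y hRR₂) hsub

end ETy

theorem substName_of_ne {a v : Name} (h : a ≠ v) (e : Expr) : substName a v e = a := by
  simp [substName, h]

namespace PTy

variable {φ : Finset IVar} {Φ : CSet}

theorem subst_closed {Ξ : Ctx} {P : Proc} {K : Interval} (h : PTy φ Φ Ξ P K) {v : Name}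
    {I J : Idx} {e : Expr} (hv : Ξ v = some (.nat I J)) (he : ∀ Γ, ETy φ Φ Γ e (.nat I J)) :
    PTy φ Φ (Ξ.minus v) (P.subst v e) K := by
  induction h generalizing I J with
  | zero => exact zero
  | par _ _ hpar ih₁ ih₂ =>
    obtain ⟨_, _, hv₁, hv₂, hp⟩ := hpar.exists_of_some hv
    cases hp
    exact par (ih₁ hv₁ he) (ih₂ hv₂ he) (hpar.minus v)
  | @tick _ _ Γ _ _ _ ih =>
    rw [Ty.delayI_eq_mapUsage] at hv
    simpa only [Proc.subst, Ctx.minus_tmap] using tick (ih (Ctx.eq_nat_of_tmap_mapUsage hv) he)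
  | @ich _ _ Γ a xs _ _ jc _ _ hΓa hxs haxs hnd hlen _ ih =>
    have hva : v ≠ a := by rintro rfl; simp at hv
    rw [Ctx.update_apply, if_neg hva] at hv
    rw [Ty.delayC_eq_mapUsage] at hv
    have hv₀ := Ctx.eq_nat_of_tmap_mapUsage hv
    have hvxs : v ∉ xs := fun hm => by simp [hxs v hm] at hv₀
    have := ih (by rwa [Ctx.extend_apply_of_not_mem hvxs, Ctx.update_apply, if_neg hva]) he
    rw [Ctx.minus_extend hvxs, Ctx.minus_update_of_ne (Ne.symm hva)] at this
    have := ich (jc := jc) (by simp [hΓa]) (fun x hx => by simp [hxs x hx]) haxs hnd hlen this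
    rw [← Ctx.minus_tmap, ← Ctx.minus_update_of_ne (Ne.symm hva)] at this
    simpa [Proc.subst, substName_of_ne (Ne.symm hva), hvxs] using this
  | @iserv _ _ Γ a xs bs _ _ jc _ _ hΓa hxs haxs hnd hlen _ ih =>
    have hva : v ≠ a := by rintro rfl; simp at hv
    rw [Ctx.update_apply, if_neg hva, Ctx.tmap_tmap] at hv
    rw [Ty.delayC_comp_bangT] at hv
    have hv₀ := Ctx.eq_nat_of_tmap_mapUsage hv
    have hvxs : v ∉ xs := fun hm => by simp [hxs v hm] at hv₀
    have := ih (by rwa [Ctx.extend_apply_of_not_mem hvxs, Ctx.update_apply, if_neg hva])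
      fun Γ => (he Γ).mono (.refl _)
    rw [Ctx.minus_extend hvxs, Ctx.minus_update_of_ne (Ne.symm hva)] at this
    have := iserv (jc := jc) (by simp [hΓa]) (fun x hx => by simp [hxs x hx]) haxs hnd hlen this
    rw [← Ctx.minus_tmap, ← Ctx.minus_tmap, ← Ctx.minus_update_of_ne (Ne.symm hva)] at this
    simpa [Proc.subst, substName_of_ne (Ne.symm hva), hvxs] using this
  | @och φ Φ Γ Γ' Θ a es Ts U V jc _ _ hΓa hΓ'a hlen hes _ hpar ih =>
    have hva : v ≠ a := by rintro rfl; simp at hv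
    rw [Ctx.update_apply, if_neg hva] at hv
    rw [Ty.delayC_eq_mapUsage] at hv
    have hv₀ := Ctx.eq_nat_of_tmap_mapUsage hv
    obtain ⟨_, _, hv₁, hv₂, hp⟩ := hpar.exists_of_some hv₀
    cases hp
    have hP := ih (by rwa [Ctx.update_apply, if_neg hva]) he
    rw [Ctx.minus_update_of_ne (Ne.symm hva)] at hP
    have hes' : ∀ p ∈ (es.map (·.subst v e)).zip Ts,
        ETy φ Φ ((Γ'.minus v).update a (.ch Ts V)) p.1 p.2 :=
      List.forall_mem_zip_map_left fun q hq => by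
        have := (hes q hq).subst_closed (by rwa [Ctx.update_apply, if_neg hva]) he
        rwa [Ctx.minus_update_of_ne (Ne.symm hva)] at this
    have := och (jc := jc) (by simp [hΓa]) (by simp [hΓ'a]) (by simpa using hlen) hes' hP
      (hpar.minus v)
    rw [← Ctx.minus_tmap, ← Ctx.minus_update_of_ne (Ne.symm hva)] at this
    simpa [Proc.subst, substName_of_ne (Ne.symm hva)] using this
  | @oserv φ Φ Γ Γ' Θ a es bs Is Ts U V jc _ K _ hΓa hΓ'a hlen hlenbs hes _ hpar ih =>
    have hva : v ≠ a := by rintro rfl; simp at hv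
    rw [Ctx.update_apply, if_neg hva] at hv
    rw [Ty.delayC_eq_mapUsage] at hv
    have hv₀ := Ctx.eq_nat_of_tmap_mapUsage hv
    obtain ⟨_, _, hv₁, hv₂, hp⟩ := hpar.exists_of_some hv₀
    cases hp
    have hP := ih (by rwa [Ctx.update_apply, if_neg hva]) he
    rw [Ctx.minus_update_of_ne (Ne.symm hva)] at hP
    have hes' : ∀ p ∈ (es.map (·.subst v e)).zip (Ts.map (·.misubst (bs.zip Is))),
        ETy φ Φ ((Γ'.minus v).update a (.serv bs K Ts V)) p.1 p.2 :=
      List.forall_mem_zip_map_left fun q hq => by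
        have := (hes q hq).subst_closed (by rwa [Ctx.update_apply, if_neg hva]) he
        rwa [Ctx.minus_update_of_ne (Ne.symm hva)] at this
    have := oserv (jc := jc) (by simp [hΓa]) (by simp [hΓ'a]) (by simpa using hlen) hlenbs hes'
      hP (hpar.minus v)
    rw [← Ctx.minus_tmap, ← Ctx.minus_update_of_ne (Ne.symm hva)] at this
    simpa [Proc.subst, substName_of_ne (Ne.symm hva)] using this
  | @case _ _ Γ _ _ _ _ _ x _ hE _ hx _ ihP ihQ =>
    have hvx : v ≠ x := by rintro rfl; simp [hx] at hv
    have hQ := ihQ (by rwa [Ctx.update_apply, if_neg hvx]) fun Γ => (he Γ).mono (.cons _ _)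
    rw [Ctx.minus_update_of_ne (Ne.symm hvx)] at hQ
    simpa [Proc.subst, hvx] using case (hE.subst_closed hv he)
      (ihP hv fun Γ => (he Γ).mono (.cons _ _)) (by simp [hx]) hQ
  | @nu _ _ Γ a _ _ _ hΓa hT _ ih =>
    have hva : v ≠ a := by rintro rfl; simp [hΓa] at hv
    have := ih (by rwa [Ctx.update_apply, if_neg hva]) he
    rw [Ctx.minus_update_of_ne (Ne.symm hva)] at this
    simpa [Proc.subst, hva] using nu (by simp [hΓa]) hT this
  | sub _ hΓΔ hK ih =>
    obtain ⟨_, hv₂, hT₂⟩ := hΓΔ.exists_of_left hv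
    cases hT₂ with
    | nat h₁ h₂ => exact sub (ih hv₂ fun Γ => .sub (he Γ) (.refl Γ) (.nat h₁ h₂)) (hΓΔ.minus v) hK

theorem inp_merge {P : Proc} {K : Interval} {Γ : Ctx} {v y : Name} {xs : List Name} {Ts : List Ty}
    {M : Usage} {jc : Cap} {R : Ty} (hxs : ∀ x ∈ xs, Γ x = none) (hyxs : y ∉ xs) (hnd : xs.Nodup)
    (hlen : xs.length = Ts.length) (hP : PTy φ Φ ((Γ.merge v y (.ch Ts M)).extend xs Ts) P K)
    (hR : Sub φ Φ R (.ch Ts (.inp zeroI jc M))) :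
    PTy φ Φ ((Γ.tmap (Ty.delayC jc)).merge v y R) (.inp y xs P) (seqComp jc K) := by
  rw [Ctx.merge_eq_update] at hP ⊢
  rw [Ctx.minus_tmap, Ctx.minus_tmap]
  exact (PTy.ich (by simp) (fun x hx => by simp [hxs x hx]) hyxs hnd hlen hP).cast
    ((CtxSub.refl _).update hR)

theorem repIn_merge {P : Proc} {K : Interval} {Γ : Ctx} {v y : Name} {xs : List Name} {bs : List IVar}
    {Ts : List Ty} {M : Usage} {jc : Cap} {R : Ty} (hxs : ∀ x ∈ xs, Γ x = none) (hyxs : y ∉ xs)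
    (hnd : xs.Nodup) (hlen : xs.length = Ts.length)
    (hP : PTy (φ ∪ bs.toFinset) Φ ((Γ.merge v y (.serv bs K Ts M)).extend xs Ts) P K)
    (hR : Sub φ Φ R (.serv bs K Ts (.bang (.inp zeroI jc M)))) :
    PTy φ Φ (((Γ.tmap Ty.bangT).tmap (Ty.delayC jc)).merge v y R) (.repIn y xs P) zeroI := by
  rw [Ctx.merge_eq_update] at hP ⊢
  rw [Ctx.minus_tmap, Ctx.minus_tmap, Ctx.minus_tmap, Ctx.minus_tmap]
  exact (PTy.iserv (by simp) (fun x hx => by simp [hxs x hx]) hyxs hnd hlen hP).cast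
    ((CtxSub.refl _).update hR)

theorem out_merge {P : Proc} {K : Interval} {Γ Γ' Θ : Ctx} {v y : Name} {es : List Expr} {Ts : List Ty}
    {M₁ M₂ : Usage} {jc : Cap} {R : Ty} (hpar : CtxPar Γ Γ' Θ) (hlen : es.length = Ts.length)
    (hes : ∀ p ∈ es.zip Ts, ETy φ Φ (Γ'.merge v y (.ch Ts M₂)) p.1 p.2)
    (hP : PTy φ Φ (Γ.merge v y (.ch Ts M₁)) P K)
    (hR : Sub φ Φ R (.ch Ts (.out zeroI jc (M₂.par M₁)))) :
    PTy φ Φ ((Θ.tmap (Ty.delayC jc)).merge v y R) (.out y es P) (seqComp jc K) := by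
  simp only [Ctx.merge_eq_update] at hP hes ⊢
  rw [Ctx.minus_tmap, Ctx.minus_tmap]
  exact (PTy.och (by simp) (by simp) hlen hes hP ((hpar.minus v).minus y)).cast
    ((CtxSub.refl _).update hR)

theorem outServ_merge {P : Proc} {K' : Interval} {Γ Γ' Θ : Ctx} {v y : Name} {es : List Expr} {bs : List IVar}
    {Is : List Idx} {K : Interval} {Ts : List Ty} {M₁ M₂ : Usage} {jc : Cap} {R : Ty}
    (hpar : CtxPar Γ Γ' Θ) (hlen : es.length = Ts.length) (hlenbs : bs.length = Is.length)
    (hes : ∀ p ∈ es.zip (Ts.map (·.misubst (bs.zip Is))),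
      ETy φ Φ (Γ'.merge v y (.serv bs K Ts M₂)) p.1 p.2)
    (hP : PTy φ Φ (Γ.merge v y (.serv bs K Ts M₁)) P K')
    (hR : Sub φ Φ R (.serv bs K Ts (.out zeroI jc (M₂.par M₁)))) :
    PTy φ Φ ((Θ.tmap (Ty.delayC jc)).merge v y R) (.out y es P)
      (seqComp jc (K'.join (K.misubst (bs.zip Is)))) := by
  simp only [Ctx.merge_eq_update] at hP hes ⊢
  rw [Ctx.minus_tmap, Ctx.minus_tmap]
  exact (PTy.oserv (by simp) (by simp) hlen hlenbs hes hP ((hpar.minus v).minus y)).cast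
    ((CtxSub.refl _).update hR)

end PTy

def MergeStable (φ : Finset IVar) (Φ : CSet) (Ξ : Ctx) (P : Proc) (K : Interval) : Prop :=
  ∀ ⦃v y : Name⦄ ⦃T S R : Ty⦄ ⦃e : Expr⦄, v ≠ y → Ξ v = some T → Ξ y = some S →
    MergeTy φ Φ y e R S T → PTy φ Φ (Ξ.merge v y R) (P.subst v e) K

namespace MergeStable

variable {φ : Finset IVar} {Φ : CSet} {P : Proc}

theorem ich {K : Interval} {Γ : Ctx} {a : Name} {xs : List Name} {Ts : List Ty} {U : Usage}
    {jc : Cap} (hΓa : Γ a = none) (hxs : ∀ x ∈ xs, Γ x = none) (haxs : a ∉ xs) (hnd : xs.Nodup)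
    (hlen : xs.length = Ts.length)
    (ih : MergeStable φ Φ ((Γ.update a (.ch Ts U)).extend xs Ts) P K) :
    MergeStable φ Φ ((Γ.tmap (Ty.delayC jc)).update a (.ch Ts (.inp zeroI jc U)))
      (.inp a xs P) (seqComp jc K) := by
  intro v y T S R e hvy hv hy hm
  have hnone : ∀ {x T}, Γ.tmap (Ty.delayC jc) x = some T → x ∉ xs := fun hx hm => by
    simp [hxs _ hm] at hx
  by_cases hva : v = a
  · -- the subject `v` becomes `y`
    subst hva
    simp only [Ctx.update_apply, if_true, if_neg (Ne.symm hvy)] at hv hy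
    cases hv
    cases hm with | ch h₁ h₂ hW =>
    obtain ⟨S₀, hy₀, hS₀⟩ := Ctx.exists_of_tmap_eq_some hy
    cases S₀ <;> cases hS₀
    rename_i X
    have := ih hvy (T := .ch Ts U) (S := .ch _ X) (R := .ch Ts (U.par X))
      (by rw [Ctx.extend_apply_of_not_mem haxs]; simp)
      (by rw [Ctx.extend_apply_of_not_mem (hnone hy)]; simp [Ne.symm hvy, hy₀])
      (.ch (h₂.symm.trans h₁) (.refl _) (.of_congr .parComm))
    rw [Ctx.merge_extend haxs (hnone hy), Ctx.merge_update_left] at this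
    simpa [Proc.subst, substName, haxs, Ctx.merge_update_left] using
      PTy.inp_merge hxs (hnone hy) hnd hlen this (Sub.ch_of h₂ (hW.trans SubU.inp_par_scope'))
  rw [Ctx.update_apply, if_neg hva] at hv
  by_cases hya : y = a
  · subst hya
    simp only [Ctx.update_apply, if_true] at hy
    cases hy
    cases hm with | ch h₁ h₂ hW =>
    obtain ⟨T₀, hv₀, hT₀⟩ := Ctx.exists_of_tmap_eq_some hv
    cases T₀ <;> cases hT₀
    rename_i X
    have := ih hvy (T := .ch _ X) (S := .ch Ts U) (R := .ch Ts (U.par X))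
      (by rw [Ctx.extend_apply_of_not_mem (hnone hv)]; simp [hvy, hv₀])
      (by rw [Ctx.extend_apply_of_not_mem haxs]; simp)
      (.ch (.refl _) (h₁.symm.trans h₂) (SubU.refl _))
    rw [Ctx.merge_extend (hnone hv) haxs, Ctx.merge_update_right] at this
    simpa [Proc.subst, substName_of_ne (Ne.symm hvy), hnone hv, Ctx.merge_update_right] using
      PTy.inp_merge hxs haxs hnd hlen this (Sub.ch_of h₁ (hW.trans SubU.inp_par_scope))
  rw [Ctx.update_apply, if_neg hya] at hy
  obtain ⟨T₀, S₀, R₀, hv₀, hy₀, hm₀, hR⟩ :=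
    MergeTy.of_tmap (Ty.delayC_eq_mapUsage jc) (fun _ _ => SubU.refl _) hv hy hm
  have := ih hvy (by rwa [Ctx.extend_apply_of_not_mem (hnone hv), Ctx.update_apply, if_neg hva])
    (by rwa [Ctx.extend_apply_of_not_mem (hnone hy), Ctx.update_apply, if_neg hya]) hm₀
  rw [Ctx.merge_extend (hnone hv) (hnone hy), Ctx.merge_update_of_ne (Ne.symm hva) (Ne.symm hya)]
    at this
  have := PTy.ich (Γ := Γ.merge v y R₀) (jc := jc) (by simp [Ne.symm hva, Ne.symm hya, hΓa])
    (fun x hx => by simp [ne_of_mem_of_not_mem hx (hnone hy), hxs x hx]) haxs hnd hlen this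
  rw [← Ctx.merge_tmap] at this
  simpa [Proc.subst, substName_of_ne (Ne.symm hva), hnone hv,
    Ctx.merge_update_of_ne (Ne.symm hva) (Ne.symm hya)] using
    this.cast (((CtxSub.refl _).merge v y hR).update (Sub.refl _))

theorem iserv {K : Interval} {Γ : Ctx} {a : Name} {xs : List Name} {bs : List IVar}
    {Ts : List Ty} {U : Usage} {jc : Cap} (hΓa : Γ a = none) (hxs : ∀ x ∈ xs, Γ x = none)
    (haxs : a ∉ xs) (hnd : xs.Nodup) (hlen : xs.length = Ts.length)
    (ih : MergeStable (φ ∪ bs.toFinset) Φ ((Γ.update a (.serv bs K Ts U)).extend xs Ts) P K) :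
    MergeStable φ Φ (((Γ.tmap Ty.bangT).tmap (Ty.delayC jc)).update a
      (.serv bs K Ts (.bang (.inp zeroI jc U)))) (.repIn a xs P) zeroI := by
  intro v y T S R e hvy hv hy hm
  rw [Ctx.tmap_tmap] at hv hy ⊢
  have hnone : ∀ {x T}, Γ.tmap (Ty.delayC jc ∘ Ty.bangT) x = some T → x ∉ xs :=
    fun hx hm => by simp [hxs _ hm] at hx
  by_cases hva : v = a
  · subst hva
    simp only [Ctx.update_apply, if_true, if_neg (Ne.symm hvy)] at hv hy
    cases hv
    cases hm with | serv h₁ h₂ hK₁ hK₂ hW =>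
    obtain ⟨S₀, hy₀, hS₀⟩ := Ctx.exists_of_tmap_eq_some hy
    cases S₀ <;> cases hS₀
    rename_i X
    have := ih hvy (T := .serv bs K Ts U) (S := .serv bs _ _ X) (R := .serv bs K Ts (U.par X))
      (by rw [Ctx.extend_apply_of_not_mem haxs]; simp)
      (by rw [Ctx.extend_apply_of_not_mem (hnone hy)]; simp [Ne.symm hvy, hy₀])
      (.serv ((h₂.symm.trans h₁).mono (.refl _)) (.refl _) ((hK₂.symm.trans hK₁).mono (.refl _))
        (semEqI.refl _) (.of_congr .parComm))
    rw [Ctx.merge_extend haxs (hnone hy), Ctx.merge_update_left] at this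
    simpa [Proc.subst, substName, haxs, Ctx.merge_update_left, Ctx.tmap_tmap] using
      PTy.repIn_merge hxs (hnone hy) hnd hlen this
        (Sub.serv_of h₂ hK₂ (hW.trans SubU.bang_par_scope'))
  rw [Ctx.update_apply, if_neg hva] at hv
  by_cases hya : y = a
  · subst hya
    simp only [Ctx.update_apply, if_true] at hy
    cases hy
    cases hm with | serv h₁ h₂ hK₁ hK₂ hW =>
    obtain ⟨T₀, hv₀, hT₀⟩ := Ctx.exists_of_tmap_eq_some hv
    cases T₀ <;> cases hT₀
    rename_i X
    have := ih hvy (T := .serv bs _ _ X) (S := .serv bs K Ts U) (R := .serv bs K Ts (U.par X))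
      (by rw [Ctx.extend_apply_of_not_mem (hnone hv)]; simp [hvy, hv₀])
      (by rw [Ctx.extend_apply_of_not_mem haxs]; simp)
      (.serv (.refl _) ((h₁.symm.trans h₂).mono (.refl _)) (semEqI.refl _)
        ((hK₁.symm.trans hK₂).mono (.refl _)) (SubU.refl _))
    rw [Ctx.merge_extend (hnone hv) haxs, Ctx.merge_update_right] at this
    simpa [Proc.subst, substName_of_ne (Ne.symm hvy), hnone hv, Ctx.merge_update_right,
      Ctx.tmap_tmap] using
      PTy.repIn_merge hxs haxs hnd hlen this (Sub.serv_of h₁ hK₁ (hW.trans SubU.bang_par_scope))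
  rw [Ctx.update_apply, if_neg hya] at hy
  obtain ⟨T₀, S₀, R₀, hv₀, hy₀, hm₀, hR⟩ := MergeTy.of_tmap (Ty.delayC_comp_bangT jc)
    (fun _ _ => SubU.of_congr UCongr.bangPar.symm) hv hy hm
  have := ih hvy (by rwa [Ctx.extend_apply_of_not_mem (hnone hv), Ctx.update_apply, if_neg hva])
    (by rwa [Ctx.extend_apply_of_not_mem (hnone hy), Ctx.update_apply, if_neg hya])
    (hm₀.mono (.refl _))
  rw [Ctx.merge_extend (hnone hv) (hnone hy), Ctx.merge_update_of_ne (Ne.symm hva) (Ne.symm hya)]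
    at this
  have := PTy.iserv (Γ := Γ.merge v y R₀) (jc := jc) (by simp [Ne.symm hva, Ne.symm hya, hΓa])
    (fun x hx => by simp [ne_of_mem_of_not_mem hx (hnone hy), hxs x hx]) haxs hnd hlen this
  rw [Ctx.tmap_tmap, ← Ctx.merge_tmap] at this
  simpa [Proc.subst, substName_of_ne (Ne.symm hva), hnone hv,
    Ctx.merge_update_of_ne (Ne.symm hva) (Ne.symm hya)] using
    this.cast (((CtxSub.refl _).merge v y hR).update (Sub.refl _))

theorem och {K : Interval} {Γ Γ' Θ : Ctx} {a : Name} {es : List Expr} {Ts : List Ty}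
    {U V : Usage} {jc : Cap} (hΓa : Γ a = none) (hΓ'a : Γ' a = none)
    (hlen : es.length = Ts.length) (hes : ∀ p ∈ es.zip Ts, ETy φ Φ (Γ'.update a (.ch Ts V)) p.1 p.2)
    (ih : MergeStable φ Φ (Γ.update a (.ch Ts U)) P K) (hpar : CtxPar Γ Γ' Θ) :
    MergeStable φ Φ ((Θ.tmap (Ty.delayC jc)).update a (.ch Ts (.out zeroI jc (V.par U))))
      (.out a es P) (seqComp jc K) := by
  intro v y T S R e hvy hv hy hm
  have hlen' : (es.map (·.subst v e)).length = Ts.length := by simpa using hlen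
  by_cases hva : v = a
  · subst hva
    simp only [Ctx.update_apply, if_true, if_neg (Ne.symm hvy)] at hv hy
    cases hv
    cases hm with | ch h₁ h₂ hW =>
    obtain ⟨S₀, hy₀, hS₀⟩ := Ctx.exists_of_tmap_eq_some hy
    cases S₀ <;> cases hS₀
    obtain ⟨_, _, hy₁, hy₂, hS⟩ := hpar.exists_of_some hy₀
    cases hS with | @ch _ Y₁ Y₂ =>
    have hP := ih hvy (T := .ch Ts U) (S := .ch _ Y₁) (R := .ch Ts (U.par Y₁)) (by simp)
      (by simp [Ne.symm hvy, hy₁]) (.ch (h₂.symm.trans h₁) (.refl _) (.of_congr .parComm))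
    rw [Ctx.merge_update_left] at hP
    have hes' : ∀ p ∈ (es.map (·.subst v (.var y))).zip Ts,
        ETy φ Φ (Γ'.merge v y (.ch Ts (V.par Y₂))) p.1 p.2 :=
      List.forall_mem_zip_map_left fun q hq => by
        have := (hes q hq).subst_merge hvy (T := .ch Ts V) (S := .ch _ Y₂) (by simp)
          (by simp [Ne.symm hvy, hy₂]) (.ch (h₂.symm.trans h₁) (.refl _) (.of_congr .parComm))
        rwa [Ctx.merge_update_left] at this
    simpa [Proc.subst, substName, Ctx.merge_update_left] using
      PTy.out_merge hpar hlen' hes' hP (Sub.ch_of h₂ (hW.trans SubU.out_par_par_scope'))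
  rw [Ctx.update_apply, if_neg hva] at hv
  by_cases hya : y = a
  · subst hya
    simp only [Ctx.update_apply, if_true] at hy
    cases hy
    cases hm with | ch h₁ h₂ hW =>
    obtain ⟨T₀, hv₀, hT₀⟩ := Ctx.exists_of_tmap_eq_some hv
    cases T₀ <;> cases hT₀
    obtain ⟨_, _, hv₁, hv₂, hT⟩ := hpar.exists_of_some hv₀
    cases hT with | @ch _ Z₁ Z₂ =>
    have hP := ih hvy (T := .ch _ Z₁) (S := .ch Ts U) (R := .ch Ts (U.par Z₁))
      (by simp [hvy, hv₁]) (by simp) (.ch (.refl _) (h₁.symm.trans h₂) (SubU.refl _))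
    rw [Ctx.merge_update_right] at hP
    have hes' : ∀ p ∈ (es.map (·.subst v (.var y))).zip Ts,
        ETy φ Φ (Γ'.merge v y (.ch Ts (V.par Z₂))) p.1 p.2 :=
      List.forall_mem_zip_map_left fun q hq => by
        have := (hes q hq).subst_merge hvy (T := .ch _ Z₂) (S := .ch Ts V) (by simp [hvy, hv₂])
          (by simp) (.ch (.refl _) (h₁.symm.trans h₂) (SubU.refl _))
        rwa [Ctx.merge_update_right] at this
    simpa [Proc.subst, substName_of_ne (Ne.symm hvy), Ctx.merge_update_right] using
      PTy.out_merge hpar hlen' hes' hP (Sub.ch_of h₁ (hW.trans SubU.out_par_par_scope))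
  rw [Ctx.update_apply, if_neg hya] at hy
  obtain ⟨T₁, T₂, S₁, S₂, R₁, R₂, R₀, hv₁, hv₂, hy₁, hy₂, hm₁, hm₂, hR₀, hR⟩ :=
    MergeTy.split_tmap (Ty.delayC_eq_mapUsage jc) (fun _ _ => rfl) hpar hv hy hm
  have hP := ih hvy (by simp [hva, hv₁]) (by simp [hya, hy₁]) hm₁
  rw [Ctx.merge_update_of_ne (Ne.symm hva) (Ne.symm hya)] at hP
  have hes' : ∀ p ∈ (es.map (·.subst v e)).zip Ts,
      ETy φ Φ ((Γ'.merge v y R₂).update a (.ch Ts V)) p.1 p.2 :=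
    List.forall_mem_zip_map_left fun q hq => by
      have := (hes q hq).subst_merge hvy (by simp [hva, hv₂]) (by simp [hya, hy₂]) hm₂
      rwa [Ctx.merge_update_of_ne (Ne.symm hva) (Ne.symm hya)] at this
  have := PTy.och (jc := jc) (by simp [Ne.symm hva, Ne.symm hya, hΓa])
    (by simp [Ne.symm hva, Ne.symm hya, hΓ'a]) hlen' hes' hP (hpar.merge v y hR₀)
  rw [← Ctx.merge_tmap] at this
  simpa [Proc.subst, substName_of_ne (Ne.symm hva),
    Ctx.merge_update_of_ne (Ne.symm hva) (Ne.symm hya)] using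
    this.cast (((CtxSub.refl _).merge v y hR).update (Sub.refl _))

theorem oserv {K' : Interval} {Γ Γ' Θ : Ctx} {a : Name} {es : List Expr} {bs : List IVar}
    {Is : List Idx} {K : Interval} {Ts : List Ty} {U V : Usage} {jc : Cap}
    (hΓa : Γ a = none) (hΓ'a : Γ' a = none) (hlen : es.length = Ts.length)
    (hlenbs : bs.length = Is.length)
    (hes : ∀ p ∈ es.zip (Ts.map (·.misubst (bs.zip Is))),
      ETy φ Φ (Γ'.update a (.serv bs K Ts V)) p.1 p.2)
    (ih : MergeStable φ Φ (Γ.update a (.serv bs K Ts U)) P K') (hpar : CtxPar Γ Γ' Θ) :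
    MergeStable φ Φ ((Θ.tmap (Ty.delayC jc)).update a (.serv bs K Ts (.out zeroI jc (V.par U))))
      (.out a es P) (seqComp jc (K'.join (K.misubst (bs.zip Is)))) := by
  intro v y T S R e hvy hv hy hm
  have hlen' : (es.map (·.subst v e)).length = Ts.length := by simpa using hlen
  by_cases hva : v = a
  · subst hva
    simp only [Ctx.update_apply, if_true, if_neg (Ne.symm hvy)] at hv hy
    cases hv
    cases hm with | serv h₁ h₂ hK₁ hK₂ hW =>
    obtain ⟨S₀, hy₀, hS₀⟩ := Ctx.exists_of_tmap_eq_some hy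
    cases S₀ <;> cases hS₀
    obtain ⟨_, _, hy₁, hy₂, hS⟩ := hpar.exists_of_some hy₀
    cases hS with | @serv _ _ _ Y₁ Y₂ =>
    have hm' : ∀ M Y : Usage, MergeTy φ Φ y (.var y) (.serv bs K Ts (M.par Y))
        (.serv bs _ _ Y) (.serv bs K Ts M) := fun _ _ =>
      .serv (h₂.symm.trans h₁) (.refl _) (hK₂.symm.trans hK₁) (semEqI.refl _)
        (.of_congr .parComm)
    have hP := ih hvy (by simp) (by simp [Ne.symm hvy, hy₁]) (hm' U Y₁)
    rw [Ctx.merge_update_left] at hP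
    have hes' : ∀ p ∈ (es.map (·.subst v (.var y))).zip (Ts.map (·.misubst (bs.zip Is))),
        ETy φ Φ (Γ'.merge v y (.serv bs K Ts (V.par Y₂))) p.1 p.2 :=
      List.forall_mem_zip_map_left fun q hq => by
        have := (hes q hq).subst_merge hvy (by simp) (by simp [Ne.symm hvy, hy₂]) (hm' V Y₂)
        rwa [Ctx.merge_update_left] at this
    simpa [Proc.subst, substName, Ctx.merge_update_left] using
      PTy.outServ_merge hpar hlen' hlenbs hes' hP
        (Sub.serv_of h₂ hK₂ (hW.trans SubU.out_par_par_scope'))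
  rw [Ctx.update_apply, if_neg hva] at hv
  by_cases hya : y = a
  · subst hya
    simp only [Ctx.update_apply, if_true] at hy
    cases hy
    cases hm with | serv h₁ h₂ hK₁ hK₂ hW =>
    obtain ⟨T₀, hv₀, hT₀⟩ := Ctx.exists_of_tmap_eq_some hv
    cases T₀ <;> cases hT₀
    obtain ⟨_, _, hv₁, hv₂, hT⟩ := hpar.exists_of_some hv₀
    cases hT with | @serv _ _ _ Z₁ Z₂ =>
    have hm' : ∀ M Z : Usage, MergeTy φ Φ y (.var y) (.serv bs K Ts (M.par Z))
        (.serv bs K Ts M) (.serv bs _ _ Z) := fun _ _ =>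
      .serv (.refl _) (h₁.symm.trans h₂) (semEqI.refl _) (hK₁.symm.trans hK₂) (SubU.refl _)
    have hP := ih hvy (by simp [hvy, hv₁]) (by simp) (hm' U Z₁)
    rw [Ctx.merge_update_right] at hP
    have hes' : ∀ p ∈ (es.map (·.subst v (.var y))).zip (Ts.map (·.misubst (bs.zip Is))),
        ETy φ Φ (Γ'.merge v y (.serv bs K Ts (V.par Z₂))) p.1 p.2 :=
      List.forall_mem_zip_map_left fun q hq => by
        have := (hes q hq).subst_merge hvy (by simp [hvy, hv₂]) (by simp) (hm' V Z₂)
        rwa [Ctx.merge_update_right] at this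
    simpa [Proc.subst, substName_of_ne (Ne.symm hvy), Ctx.merge_update_right] using
      PTy.outServ_merge hpar hlen' hlenbs hes' hP
        (Sub.serv_of h₁ hK₁ (hW.trans SubU.out_par_par_scope))
  rw [Ctx.update_apply, if_neg hya] at hy
  obtain ⟨T₁, T₂, S₁, S₂, R₁, R₂, R₀, hv₁, hv₂, hy₁, hy₂, hm₁, hm₂, hR₀, hR⟩ :=
    MergeTy.split_tmap (Ty.delayC_eq_mapUsage jc) (fun _ _ => rfl) hpar hv hy hm
  have hP := ih hvy (by simp [hva, hv₁]) (by simp [hya, hy₁]) hm₁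
  rw [Ctx.merge_update_of_ne (Ne.symm hva) (Ne.symm hya)] at hP
  have hes' : ∀ p ∈ (es.map (·.subst v e)).zip (Ts.map (·.misubst (bs.zip Is))),
      ETy φ Φ ((Γ'.merge v y R₂).update a (.serv bs K Ts V)) p.1 p.2 :=
    List.forall_mem_zip_map_left fun q hq => by
      have := (hes q hq).subst_merge hvy (by simp [hva, hv₂]) (by simp [hya, hy₂]) hm₂
      rwa [Ctx.merge_update_of_ne (Ne.symm hva) (Ne.symm hya)] at this
  have := PTy.oserv (jc := jc) (by simp [Ne.symm hva, Ne.symm hya, hΓa])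
    (by simp [Ne.symm hva, Ne.symm hya, hΓ'a]) hlen' hlenbs hes' hP (hpar.merge v y hR₀)
  rw [← Ctx.merge_tmap] at this
  simpa [Proc.subst, substName_of_ne (Ne.symm hva),
    Ctx.merge_update_of_ne (Ne.symm hva) (Ne.symm hya)] using
    this.cast (((CtxSub.refl _).merge v y hR).update (Sub.refl _))

end MergeStable

theorem PTy.mergeStable {φ : Finset IVar} {Φ : CSet} {Ξ : Ctx} {P : Proc} {K : Interval}
    (h : PTy φ Φ Ξ P K) : MergeStable φ Φ Ξ P K := by
  induction h with
  | zero => exact fun _ _ _ _ _ _ _ _ _ _ => zero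
  | @par _ _ _ _ _ _ _ _ _ _ _ hpar ih₁ ih₂ =>
    intro v y T S R e hvy hv hy hm
    obtain ⟨_, _, hv₁, hv₂, hT⟩ := hpar.exists_of_some hv
    obtain ⟨_, _, hy₁, hy₂, hS⟩ := hpar.exists_of_some hy
    obtain ⟨_, _, _, hm₁, hm₂, hR₀, hR⟩ := hm.split hS hT
    exact (par (ih₁ hvy hv₁ hy₁ hm₁) (ih₂ hvy hv₂ hy₂ hm₂) (hpar.merge v y hR₀)).cast
      ((CtxSub.refl _).merge v y hR)
  | tick _ ih =>
    intro v y T S R e hvy hv hy hm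
    obtain ⟨_, _, _, hv₀, hy₀, hm₀, hR⟩ := MergeTy.of_tmap (Ty.delayI_eq_mapUsage oneI)
      (fun _ _ => SubU.refl _) hv hy hm
    have := tick (ih hvy hv₀ hy₀ hm₀)
    rw [← Ctx.merge_tmap] at this
    exact this.cast ((CtxSub.refl _).merge v y hR)
  | ich hΓa hxs haxs hnd hlen _ ih => exact MergeStable.ich hΓa hxs haxs hnd hlen ih
  | iserv hΓa hxs haxs hnd hlen _ ih => exact MergeStable.iserv hΓa hxs haxs hnd hlen ih
  | och hΓa hΓ'a hlen hes _ hpar ih => exact MergeStable.och hΓa hΓ'a hlen hes ih hpar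
  | oserv hΓa hΓ'a hlen hlenbs hes _ hpar ih =>
    exact MergeStable.oserv hΓa hΓ'a hlen hlenbs hes ih hpar
  | @case _ _ _ _ _ _ _ _ x _ hE _ hx _ ihP ihQ =>
    intro v y T S R e hvy hv hy hm
    have hvx : v ≠ x := by rintro rfl; simp [hx] at hv
    have hyx : y ≠ x := by rintro rfl; simp [hx] at hy
    have hQ := ihQ hvy (by simp [hvx, hv]) (by simp [hyx, hy]) (hm.mono (.cons _ _))
    rw [Ctx.merge_update_of_ne (Ne.symm hvx) (Ne.symm hyx)] at hQ
    simpa [Proc.subst, hvx] using case (hE.subst_merge hvy hv hy hm)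
      (ihP hvy hv hy (hm.mono (.cons _ _))) (by simp [Ne.symm hvx, Ne.symm hyx, hx]) hQ
  | @nu _ _ _ a _ _ _ hΓa hT _ ih =>
    intro v y T S R e hvy hv hy hm
    have hva : v ≠ a := by rintro rfl; simp [hΓa] at hv
    have hya : y ≠ a := by rintro rfl; simp [hΓa] at hy
    have := ih hvy (by simp [hva, hv]) (by simp [hya, hy]) hm
    rw [Ctx.merge_update_of_ne (Ne.symm hva) (Ne.symm hya)] at this
    simpa [Proc.subst, hva] using nu (by simp [Ne.symm hva, Ne.symm hya, hΓa]) hT this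
  | sub _ hΓΔ hK ih =>
    intro v y T S R e hvy hv hy hm
    obtain ⟨_, hv₂, hTT₂⟩ := hΓΔ.exists_of_left hv
    obtain ⟨_, hy₂, hSS₂⟩ := hΓΔ.exists_of_left hy
    obtain ⟨_, hm₂, hRR₂⟩ := hm.of_sub hSS₂ hTT₂
    exact sub (ih hvy hv₂ hy₂ hm₂) (hΓΔ.merge v y hRR₂) hK

/-- Substitution for the usage type system: substituting an
expression `e` of type `T` (typed in `Δ`) for a variable `v : T` merges the
contexts by parallel composition. -/
theorem substitution (φ : Finset IVar) (Φ : CSet) (Γ Δ Θ : Ctx)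
    (hpar : CtxPar Γ Δ Θ) (v : Name) (T : Ty) (hv : Γ v = none)
    (e : Expr) (he : ETy φ Φ Δ e T) :
    (∀ e' T', ETy φ Φ (Γ.update v T) e' T' → ETy φ Φ Θ (e'.subst v e) T') ∧
    (∀ P K, PTy φ Φ (Γ.update v T) P K → PTy φ Φ Θ (P.subst v e) K) := by
  rcases e.fv.eq_empty_or_nonempty with hclosed | ⟨y, hy⟩
  · have he' : ∀ Γ', ETy φ Φ Γ' e T := fun _ => he.of_fv_agree (by simp [hclosed])
    obtain ⟨I, J, rfl⟩ : ∃ I J, T = .nat I J := by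
      cases T with
      | nat I J => exact ⟨I, J, rfl⟩
      | _ =>
        obtain ⟨x, rfl⟩ := he.exists_eq_var_of_not_isNat (fun h => h)
        simp [Expr.fv] at hclosed
    have hcast : CtxSub φ Φ Θ ((Γ.update v (.nat I J)).minus v) := by
      rw [Ctx.minus_update_self, Ctx.minus_of_eq_none hv]
      exact hpar.ctxSub_left
    exact ⟨fun e' T' h => (h.subst_closed (by simp) he').cast hcast,
      fun P K h => (h.subst_closed (by simp) he').cast hcast⟩
  · obtain ⟨Sy, hSy⟩ := Option.isSome_iff_exists.1 (he.isSome_of_mem_fv hy)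
    have hvy : v ≠ y := by rintro rfl; simp [hpar.eq_none_of_left hv] at hSy
    obtain ⟨SΓ, SΘ, hΓy, hΘy, hp⟩ := hpar.exists_of_some_right hSy
    have hm : MergeTy φ Φ y e SΘ SΓ T := MergeTy.of_tyPar
      (he.of_fv_agree fun x hx => by simp [Expr.eq_of_mem_fv hx hy, hSy]) hy hp
    have hcast : CtxSub φ Φ Θ ((Γ.update v T).merge v y SΘ) := by
      rw [Ctx.merge_update_left, Ctx.merge, Ctx.minus_of_eq_none hv, ← Ctx.update_eq_self hΘy]
      exact hpar.ctxSub_left.update (Sub.refl _)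
    exact ⟨fun e' T' h => (h.subst_merge hvy (by simp) (by simp [Ne.symm hvy, hΓy]) hm).cast hcast,
      fun P K h => (h.mergeStable hvy (by simp) (by simp [Ne.symm hvy, hΓy]) hm).cast hcast⟩

end PiSpan
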